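/- arXiv:2104.12445 — 6 statements merged into one kernel-verified Lean document; each statement's English description precedes it below -/
import Mathlib

section
/- For all n ≥ 2, the polynomial identity D_n(t) = B_n(t) − n·2^{n−1}·t·S_{n−1}(t) holds, where D_n, B_n, S_{n−1} are the Eulerian polynomials of types D, B, and A respectively. -/
/-- A signed permutation of `{1,...,n}` in window notation: `u i` for `i ∈ {1,...,n}`
is the `i`-th letter, with absolute values forming a permutation of `{1,...,n}`;
`u` is `0` outside `{1,...,n}`. -/
def IsSignedPerm (n : ℕ) (u : ℕ → ℤ) : Prop :=
  (∀ i ∈ Finset.Icc 1 n, 1 ≤ |u i| ∧ |u i| ≤ (n : ℤ)) ∧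
  (∀ i ∈ Finset.Icc 1 n, ∀ j ∈ Finset.Icc 1 n, |u i| = |u j| → i = j) ∧
  (∀ i, i ∉ Finset.Icc 1 n → u i = 0)

/-- An (ordinary) permutation of `{1,...,n}`, as a signed permutation with all letters positive. -/
def IsPermWord (n : ℕ) (w : ℕ → ℤ) : Prop :=
  IsSignedPerm n w ∧ ∀ i ∈ Finset.Icc 1 n, 0 < w i

/-- Number of (type A, i.e. strictly positive) descents: indices `i ∈ {1,...,n-1}` with `u i > u (i+1)`. -/
def descA (n : ℕ) (u : ℕ → ℤ) : ℕ :=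
  ((Finset.Icc 1 (n - 1)).filter (fun i => u (i + 1) < u i)).card

/-- Number of type B descents: indices `i ∈ {0,...,n-1}` with `u i > u (i+1)`, where `u 0 = 0`. -/
def descB (n : ℕ) (u : ℕ → ℤ) : ℕ :=
  ((Finset.range n).filter (fun i => u (i + 1) < u i)).card

/-- Number of type D descents: indices `i ∈ {0,...,n-1}` with `u i > u (i+1)`, where `u_0 := -u_2`. -/
def descD (n : ℕ) (u : ℕ → ℤ) : ℕ :=
  ((Finset.range n).filter (fun i => u (i + 1) < (if i = 0 then -(u 2) else u i))).card

/-- A signed permutation is even-signed if it has an even number of negative letters. -/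
def IsEvenSigned (n : ℕ) (u : ℕ → ℤ) : Prop :=
  Even ((Finset.Icc 1 n).filter (fun i => u i < 0)).card

/-- Type A Eulerian number `A(n,k)`. -/
noncomputable def eulA (n k : ℕ) : ℕ := {w : ℕ → ℤ | IsPermWord n w ∧ descA n w = k}.ncard

/-- Type B Eulerian number `B(n,k)`. -/
noncomputable def eulB (n k : ℕ) : ℕ := {u : ℕ → ℤ | IsSignedPerm n u ∧ descB n u = k}.ncard

/-- Type D Eulerian number `D(n,k)`. -/
noncomputable def eulD (n k : ℕ) : ℕ :=
  {u : ℕ → ℤ | IsSignedPerm n u ∧ IsEvenSigned n u ∧ descD n u = k}.ncard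


open Finset

namespace StemAux

/-- The word (in positions `1..L`) attached to a value tuple `g : Fin L → ℤ`. -/
def gword (L : ℕ) (g : Fin L → ℤ) : ℕ → ℤ := fun i =>
  if h : 1 ≤ i ∧ i ≤ L then g ⟨i - 1, by omega⟩ else 0

/-- Finite model of signed permutations: a permutation together with signs on values. -/
abbrev Mdl (L : ℕ) := Equiv.Perm (Fin L) × (Fin L → Bool)

def gval (L : ℕ) (m : Mdl L) : Fin L → ℤ := fun j =>
  (if m.2 (m.1 j) then 1 else -1) * ((m.1 j : ℕ) + 1)

def wrd (L : ℕ) (m : Mdl L) : ℕ → ℤ := gword L (gval L m)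

lemma gword_eval {L : ℕ} (g : Fin L → ℤ) {i : ℕ} (j : Fin L)
    (h1 : 1 ≤ i) (hj : (j : ℕ) + 1 = i) : gword L g i = g j := by
  have h2 : i ≤ L := by have := j.isLt; omega
  unfold gword
  rw [dif_pos ⟨h1, h2⟩]
  congr 1
  ext
  simp only
  omega

lemma gword_zero {L : ℕ} (g : Fin L → ℤ) {i : ℕ} (h : ¬(1 ≤ i ∧ i ≤ L)) :
    gword L g i = 0 := dif_neg h

lemma abs_gval {L : ℕ} (m : Mdl L) (j : Fin L) :
    |gval L m j| = (m.1 j : ℕ) + 1 := by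
  unfold gval
  cases h : m.2 (m.1 j)
  · simp only [Bool.false_eq_true, if_false, neg_one_mul, abs_neg]
    rw [abs_of_nonneg (by positivity)]
  · simp only [if_true, one_mul]
    rw [abs_of_nonneg (by positivity)]

lemma gval_ne_zero {L : ℕ} (m : Mdl L) (j : Fin L) : gval L m j ≠ 0 := by
  intro h
  have := abs_gval m j
  rw [h] at this
  simp at this
  omega


lemma wrd_eval {L : ℕ} (m : Mdl L) {i : ℕ} (j : Fin L)
    (h1 : 1 ≤ i) (hj : (j : ℕ) + 1 = i) : wrd L m i = gval L m j :=
  gword_eval _ j h1 hj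

lemma wrd_zero {L : ℕ} (m : Mdl L) {i : ℕ} (h : ¬(1 ≤ i ∧ i ≤ L)) :
    wrd L m i = 0 := gword_zero _ h

lemma isSignedPerm_wrd (L : ℕ) (m : Mdl L) : IsSignedPerm L (wrd L m) := by
  refine ⟨?_, ?_, ?_⟩
  · intro i hi
    rw [Finset.mem_Icc] at hi
    rw [wrd_eval m ⟨i - 1, by omega⟩ hi.1 (by simp; omega), abs_gval]
    constructor
    · push_cast; omega
    · have : (m.1 ⟨i - 1, by omega⟩ : ℕ) < L := (m.1 _).isLt
      push_cast
      omega
  · intro i hi j hj hij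
    rw [Finset.mem_Icc] at hi hj
    rw [wrd_eval m ⟨i - 1, by omega⟩ hi.1 (by simp; omega),
      wrd_eval m ⟨j - 1, by omega⟩ hj.1 (by simp; omega), abs_gval, abs_gval] at hij
    have h2 : m.1 ⟨i - 1, by omega⟩ = m.1 ⟨j - 1, by omega⟩ := by
      ext
      have : ((m.1 ⟨i - 1, by omega⟩ : ℕ) : ℤ) = ((m.1 ⟨j - 1, by omega⟩ : ℕ) : ℤ) := by omega
      exact_mod_cast this
    have h3 := m.1.injective h2
    have h4 : i - 1 = j - 1 := congrArg Fin.val h3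
    omega
  · intro i hi
    rw [Finset.mem_Icc] at hi
    exact wrd_zero m (by omega)

lemma wrd_inj (L : ℕ) : Function.Injective (wrd L) := by
  intro m m' h
  have hval : ∀ j : Fin L, gval L m j = gval L m' j := by
    intro j
    have := congrFun h ((j : ℕ) + 1)
    rwa [wrd_eval m j (by omega) (by simp), wrd_eval m' j (by omega) (by simp)] at this
  have hperm : ∀ j : Fin L, m.1 j = m'.1 j := by
    intro j
    have h1 := hval j
    have h2 : |gval L m j| = |gval L m' j| := by rw [h1]
    rw [abs_gval, abs_gval] at h2
    ext
    have : ((m.1 j : ℕ) : ℤ) = ((m'.1 j : ℕ) : ℤ) := by omega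
    exact_mod_cast this
  have hp : m.1 = m'.1 := Equiv.ext hperm
  have hsgn : m.2 = m'.2 := by
    funext k
    have hj := hval (m.1.symm k)
    unfold gval at hj
    rw [Equiv.apply_symm_apply] at hj
    rw [← hp, Equiv.apply_symm_apply] at hj
    have hpos : (0:ℤ) < (k : ℕ) + 1 := by positivity
    cases hk : m.2 k <;> cases hk' : m'.2 k <;> rw [hk, hk'] at hj <;> simp at hj <;> omega
  exact Prod.ext hp hsgn

lemma exists_wrd {L : ℕ} {u : ℕ → ℤ} (hu : IsSignedPerm L u) : ∃ m : Mdl L, wrd L m = u := by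
  obtain ⟨h1, h2, h3⟩ := hu
  have hmem : ∀ j : Fin L, (j : ℕ) + 1 ∈ Finset.Icc 1 L := by
    intro j
    rw [Finset.mem_Icc]
    have := j.isLt
    omega
  have habs : ∀ j : Fin L, 1 ≤ (u ((j : ℕ) + 1)).natAbs ∧ (u ((j : ℕ) + 1)).natAbs ≤ L := by
    intro j
    have h := h1 _ (hmem j)
    rw [Int.abs_eq_natAbs] at h
    constructor <;> [exact_mod_cast h.1; exact_mod_cast h.2]
  have hf : ∀ j : Fin L, (u ((j : ℕ) + 1)).natAbs - 1 < L := fun j => by have := habs j; omega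
  set f : Fin L → Fin L := fun j => ⟨(u ((j : ℕ) + 1)).natAbs - 1, hf j⟩ with hfdef
  have hfinj : Function.Injective f := by
    intro j j' hjj
    have hv : (u ((j : ℕ) + 1)).natAbs - 1 = (u ((j' : ℕ) + 1)).natAbs - 1 := congrArg Fin.val hjj
    have hv2 : (u ((j : ℕ) + 1)).natAbs = (u ((j' : ℕ) + 1)).natAbs := by
      have := habs j; have := habs j'; omega
    have habseq : |u ((j : ℕ) + 1)| = |u ((j' : ℕ) + 1)| := by
      rw [Int.abs_eq_natAbs, Int.abs_eq_natAbs]; exact_mod_cast hv2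
    have := h2 _ (hmem j) _ (hmem j') habseq
    ext
    omega
  set σ : Equiv.Perm (Fin L) := Equiv.ofBijective f (Finite.injective_iff_bijective.mp hfinj)
    with hσdef
  have hσ : ∀ j, σ j = f j := fun j => rfl
  set ε : Fin L → Bool := fun k => decide (0 < u ((σ.symm k : ℕ) + 1)) with hεdef
  refine ⟨(σ, ε), ?_⟩
  funext i
  by_cases hi : 1 ≤ i ∧ i ≤ L
  · have hj1 : ((⟨i - 1, by omega⟩ : Fin L) : ℕ) + 1 = i := by simp; omega
    rw [wrd_eval (σ, ε) ⟨i - 1, by omega⟩ hi.1 hj1]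
    unfold gval
    simp only
    have hfv : ((σ ⟨i - 1, by omega⟩ : Fin L) : ℕ) = (u i).natAbs - 1 := by
      rw [hσ]
      show (u ((i - 1) + 1)).natAbs - 1 = (u i).natAbs - 1
      have hii : i - 1 + 1 = i := by omega
      rw [hii]
    have hna : 1 ≤ (u i).natAbs := by
      have := habs ⟨i - 1, by omega⟩
      rw [hj1] at this
      exact this.1
    have hεv : ε (σ ⟨i - 1, by omega⟩) = decide (0 < u i) := by
      rw [hεdef]
      simp only [Equiv.symm_apply_apply]
      rw [hj1]
    simp only [hεv, hfv]
    have hcast : (((u i).natAbs - 1 : ℕ) : ℤ) + 1 = ((u i).natAbs : ℤ) := by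
      push_cast [hna]
      omega
    rw [hcast]
    by_cases hpos : 0 < u i
    · rw [decide_eq_true hpos]
      simp only [if_true, one_mul]
      rw [Int.natAbs_of_nonneg hpos.le]
    · rw [decide_eq_false hpos]
      simp only [Bool.false_eq_true, if_false]
      have hneg : u i < 0 := by
        rcases lt_trichotomy (u i) 0 with h | h | h
        · exact h
        · exfalso; rw [h] at hna; simp at hna
        · exact absurd h hpos
      rw [Int.ofNat_natAbs_of_nonpos hneg.le]
      ring
  · rw [wrd_zero _ hi, h3 i (by rw [Finset.mem_Icc]; omega)]

lemma ncard_signed (L : ℕ) (P : (ℕ → ℤ) → Prop)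
    [DecidablePred fun m : Mdl L => P (wrd L m)] :
    {u : ℕ → ℤ | IsSignedPerm L u ∧ P u}.ncard
      = (Finset.univ.filter (fun m : Mdl L => P (wrd L m))).card := by
  have h1 : {u : ℕ → ℤ | IsSignedPerm L u ∧ P u} = wrd L '' {m | P (wrd L m)} := by
    ext u
    constructor
    · rintro ⟨hs, hp⟩
      obtain ⟨m, hm⟩ := exists_wrd hs
      refine ⟨m, ?_, hm⟩
      show P (wrd L m)
      rw [hm]
      exact hp
    · rintro ⟨m, hp, rfl⟩
      exact ⟨isSignedPerm_wrd L m, hp⟩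
  rw [h1, Set.ncard_image_of_injective _ (wrd_inj L), Set.ncard_eq_toFinset_card',
    Set.toFinset_setOf]

/-- descents strictly inside positions `2..n-1`. -/
def cstat (n : ℕ) (u : ℕ → ℤ) : ℕ :=
  ((Finset.Icc 2 (n - 1)).filter (fun i => u (i + 1) < u i)).card

lemma range_decomp {n : ℕ} (hn : 2 ≤ n) :
    Finset.range n = insert 0 (insert 1 (Finset.Icc 2 (n - 1))) := by
  ext i
  simp only [Finset.mem_range, Finset.mem_insert, Finset.mem_Icc]
  omega

lemma card_filter_range {n : ℕ} (hn : 2 ≤ n) (p : ℕ → Prop) [DecidablePred p] :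
    ((Finset.range n).filter p).card =
      ((Finset.Icc 2 (n - 1)).filter p).card + ((if p 0 then 1 else 0) + (if p 1 then 1 else 0)) := by
  rw [range_decomp hn]
  have h00 : (0 : ℕ) ∉ Finset.Icc 2 (n - 1) := by rw [Finset.mem_Icc]; omega
  have h11 : (1 : ℕ) ∉ Finset.Icc 2 (n - 1) := by rw [Finset.mem_Icc]; omega
  have hf0 : (0 : ℕ) ∉ (Finset.Icc 2 (n - 1)).filter p :=
    fun hc => h00 (Finset.mem_of_mem_filter 0 hc)
  have hf1 : (1 : ℕ) ∉ (Finset.Icc 2 (n - 1)).filter p :=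
    fun hc => h11 (Finset.mem_of_mem_filter 1 hc)
  have hf0' : (0 : ℕ) ∉ insert 1 ((Finset.Icc 2 (n - 1)).filter p) := by
    rw [Finset.mem_insert]
    push_neg
    exact ⟨by omega, hf0⟩
  have c1 : (insert 1 ((Finset.Icc 2 (n - 1)).filter p)).card
      = ((Finset.Icc 2 (n - 1)).filter p).card + 1 := Finset.card_insert_of_notMem hf1
  have c0 : (insert 0 (insert 1 ((Finset.Icc 2 (n - 1)).filter p))).card
      = (insert 1 ((Finset.Icc 2 (n - 1)).filter p)).card + 1 :=
    Finset.card_insert_of_notMem hf0'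
  have c0' : (insert 0 ((Finset.Icc 2 (n - 1)).filter p)).card
      = ((Finset.Icc 2 (n - 1)).filter p).card + 1 := Finset.card_insert_of_notMem hf0
  rw [Finset.filter_insert, Finset.filter_insert]
  by_cases hp0 : p 0 <;> by_cases hp1 : p 1 <;>
    simp only [hp0, hp1, if_true, if_false] <;> omega

lemma descB_decomp {n : ℕ} (hn : 2 ≤ n) (u : ℕ → ℤ) (h0 : u 0 = 0) :
    descB n u = cstat n u + ((if u 1 < 0 then 1 else 0) + (if u 2 < u 1 then 1 else 0)) := by
  unfold descB cstat
  rw [card_filter_range hn, h0]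

lemma descD_decomp {n : ℕ} (hn : 2 ≤ n) (u : ℕ → ℤ) :
    descD n u = cstat n u + ((if u 1 < -(u 2) then 1 else 0) + (if u 2 < u 1 then 1 else 0)) := by
  unfold descD cstat
  rw [card_filter_range hn]
  have hset : (Finset.Icc 2 (n - 1)).filter
        (fun i => u (i + 1) < (if i = 0 then -(u 2) else u i))
      = (Finset.Icc 2 (n - 1)).filter (fun i => u (i + 1) < u i) := by
    apply Finset.filter_congr
    intro i hi
    rw [Finset.mem_Icc] at hi
    have hi0 : i ≠ 0 := by omega
    simp [hi0]
  rw [hset]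
  norm_num

/-- negate the sign of the first letter. -/
def flip (L : ℕ) (m : Mdl (L + 1)) : Mdl (L + 1) :=
  (m.1, Function.update m.2 (m.1 0) (!(m.2 (m.1 0))))

lemma flip_flip (L : ℕ) (m : Mdl (L + 1)) : flip L (flip L m) = m := by
  unfold flip
  simp only [Function.update_self]
  refine Prod.ext rfl ?_
  simp only
  rw [Function.update_idem, Bool.not_not, Function.update_eq_self]

lemma wrd_flip_one (L : ℕ) (m : Mdl (L + 1)) :
    wrd (L + 1) (flip L m) 1 = -(wrd (L + 1) m 1) := by
  rw [wrd_eval _ (0 : Fin (L + 1)) le_rfl (by simp), wrd_eval _ (0 : Fin (L + 1)) le_rfl (by simp)]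
  unfold gval flip
  simp only [Function.update_self]
  cases m.2 (m.1 0) <;> simp

lemma wrd_flip_ne (L : ℕ) (m : Mdl (L + 1)) {i : ℕ} (hi : i ≠ 1) :
    wrd (L + 1) (flip L m) i = wrd (L + 1) m i := by
  by_cases h : 1 ≤ i ∧ i ≤ L + 1
  · rw [wrd_eval _ ⟨i - 1, by omega⟩ h.1 (by simp; omega),
      wrd_eval _ ⟨i - 1, by omega⟩ h.1 (by simp; omega)]
    unfold gval flip
    simp only
    have hne : m.1 ⟨i - 1, by omega⟩ ≠ m.1 0 := by
      intro hcon
      have := m.1.injective hcon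
      have := congrArg Fin.val this
      simp at this
      omega
    simp only [Function.update_of_ne hne]
  · rw [wrd_zero _ h, wrd_zero _ h]

lemma cstat_flip (L : ℕ) (m : Mdl (L + 1)) :
    cstat (L + 1) (wrd (L + 1) (flip L m)) = cstat (L + 1) (wrd (L + 1) m) := by
  unfold cstat
  congr 1
  apply Finset.filter_congr
  intro i hi
  rw [Finset.mem_Icc] at hi
  rw [wrd_flip_ne L m (by omega), wrd_flip_ne L m (by omega)]

lemma descD_flip {L : ℕ} (hL : 1 ≤ L) (m : Mdl (L + 1)) :
    descD (L + 1) (wrd (L + 1) (flip L m)) = descD (L + 1) (wrd (L + 1) m) := by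
  have hn : 2 ≤ L + 1 := by omega
  rw [descD_decomp hn, descD_decomp hn, cstat_flip, wrd_flip_one, wrd_flip_ne L m (by omega)]
  congr 1
  have e1 : (if -(wrd (L + 1) m 1) < -(wrd (L + 1) m 2) then 1 else 0)
      = (if wrd (L + 1) m 2 < wrd (L + 1) m 1 then 1 else 0) := if_congr (by omega) rfl rfl
  have e2 : (if wrd (L + 1) m 2 < -(wrd (L + 1) m 1) then 1 else 0)
      = (if wrd (L + 1) m 1 < -(wrd (L + 1) m 2) then 1 else 0) := if_congr (by omega) rfl rfl
  rw [e1, e2]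
  exact add_comm _ _

lemma wrd_one_ne_zero {L : ℕ} (m : Mdl (L + 1)) : wrd (L + 1) m 1 ≠ 0 := by
  rw [wrd_eval _ (0 : Fin (L + 1)) le_rfl (by simp)]
  exact gval_ne_zero m 0

lemma evenSigned_flip {L : ℕ} (hL : 1 ≤ L) (m : Mdl (L + 1)) :
    IsEvenSigned (L + 1) (wrd (L + 1) (flip L m)) ↔ ¬ IsEvenSigned (L + 1) (wrd (L + 1) m) := by
  unfold IsEvenSigned
  set s := (Finset.Icc 1 (L + 1)).filter (fun i => wrd (L + 1) m i < 0) with hs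
  set a := wrd (L + 1) m 1 with ha
  have hane : a ≠ 0 := wrd_one_ne_zero m
  have h1mem : (1 : ℕ) ∈ Finset.Icc 1 (L + 1) := by rw [Finset.mem_Icc]; omega
  have hsplit : (Finset.Icc 1 (L + 1)).filter (fun i => wrd (L + 1) (flip L m) i < 0)
      = if a < 0 then s.erase 1 else insert 1 s := by
    ext i
    by_cases hi1 : i = 1
    · subst hi1
      simp only [Finset.mem_filter, h1mem, true_and, wrd_flip_one]
      by_cases hc : a < 0
      · simp only [hc, if_true, Finset.mem_erase, ne_eq, not_true_eq_false, false_and,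
          iff_false, ← ha]
        omega
      · simp only [hc, if_false, Finset.mem_insert, true_or, iff_true, ← ha]
        omega
    · rw [Finset.mem_filter, wrd_flip_ne L m hi1]
      by_cases hc : a < 0
      · simp only [hc, if_true, Finset.mem_erase, ne_eq, hi1, not_false_eq_true, true_and,
          Finset.mem_filter, hs]
      · simp only [hc, if_false, Finset.mem_insert, hi1, false_or, Finset.mem_filter, hs]
  rw [hsplit]
  by_cases hc : a < 0
  · have h1s : 1 ∈ s := by rw [hs, Finset.mem_filter]; exact ⟨h1mem, by rw [← ha]; exact hc⟩
    rw [if_pos hc, Finset.card_erase_of_mem h1s]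
    have hcard : 1 ≤ s.card := Finset.card_pos.mpr ⟨1, h1s⟩
    rw [Nat.even_sub hcard]
    simp [Nat.not_even_one]
  · have h1s : 1 ∉ s := by
      rw [hs, Finset.mem_filter]
      rw [← ha]
      push_neg
      intro _
      omega
    rw [if_neg hc, Finset.card_insert_of_notMem h1s, Nat.even_add_one]

open Polynomial in
lemma key_pair (a b : ℤ) (ha : a ≠ 0) (c : ℕ) :
    (X : ℤ[X]) ^ (c + ((if a < 0 then 1 else 0) + (if b < a then 1 else 0)))
      + X ^ (c + ((if -a < 0 then 1 else 0) + (if b < -a then 1 else 0)))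
    = X ^ (c + ((if a < -b then 1 else 0) + (if b < a then 1 else 0))) + X ^ (c + 1) := by
  rcases ha.lt_or_gt with h | h
  · have hna : ¬(-a < 0) := by omega
    by_cases h2 : b < a
    · rw [if_pos h, if_pos h2, if_neg hna, if_pos (by omega : b < -a), if_pos (by omega : a < -b)]
      all_goals ring
    · by_cases h3 : b < -a
      · rw [if_pos h, if_neg h2, if_neg hna, if_pos h3, if_pos (by omega : a < -b)]
        all_goals ring
      · rw [if_pos h, if_neg h2, if_neg hna, if_neg h3, if_neg (by omega : ¬(a < -b))]
        all_goals ring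
  · have hna : -a < 0 := by omega
    have hn : ¬(a < 0) := by omega
    by_cases h2 : b < a
    · by_cases h3 : b < -a
      · rw [if_neg hn, if_pos h2, if_pos hna, if_pos h3, if_pos (by omega : a < -b)]
        all_goals ring
      · rw [if_neg hn, if_pos h2, if_pos hna, if_neg h3, if_neg (by omega : ¬(a < -b))]
        all_goals ring
    · rw [if_neg hn, if_neg h2, if_pos hna, if_neg (by omega : ¬(b < -a)),
        if_neg (by omega : ¬(a < -b))]
      all_goals ring

lemma descA_gword_congr {N : ℕ} (g g' : Fin N → ℤ)
    (h : ∀ x y, g x < g y ↔ g' x < g' y) :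
    descA N (gword N g) = descA N (gword N g') := by
  unfold descA
  congr 1
  apply Finset.filter_congr
  intro i hi
  rw [Finset.mem_Icc] at hi
  have hN : 2 ≤ N := by omega
  have hiN : i < N := by omega
  rw [gword_eval g ⟨i, hiN⟩ (by omega) (by simp), gword_eval g' ⟨i, hiN⟩ (by omega) (by simp),
    gword_eval g ⟨i - 1, by omega⟩ hi.1 (by simp; omega),
    gword_eval g' ⟨i - 1, by omega⟩ hi.1 (by simp; omega)]
  exact h _ _

set_option maxHeartbeats 4000000 in
lemma cstat_gword {L : ℕ} (f : Fin (L + 2) → ℤ) :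
    cstat (L + 2) (gword (L + 2) f) = descA (L + 1) (gword (L + 1) (f ∘ Fin.succ)) := by
  unfold cstat descA
  have h1 : (L + 2 : ℕ) - 1 = L + 1 := rfl
  have h2 : (L + 1 : ℕ) - 1 = L := rfl
  rw [h1, h2]
  have hmap : (Finset.Icc 1 L).map (addRightEmbedding 1) = Finset.Icc 2 (L + 1) := by
    norm_num [Finset.map_add_right_Icc]
  rw [← hmap, Finset.filter_map, Finset.card_map]
  congr 1
  apply Finset.filter_congr
  intro i hi
  rw [Finset.mem_Icc] at hi
  simp only [Function.comp_apply, addRightEmbedding_apply]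
  have e1 : gword (L + 2) f (i + 1 + 1) = f ⟨i + 1, by omega⟩ :=
    gword_eval f ⟨i + 1, by omega⟩ (by omega) (by simp)
  have e2 : gword (L + 2) f (i + 1) = f ⟨i, by omega⟩ :=
    gword_eval f ⟨i, by omega⟩ (by omega) (by simp)
  have e3 : gword (L + 1) (f ∘ Fin.succ) (i + 1) = f ⟨i + 1, by omega⟩ := by
    rw [gword_eval (f ∘ Fin.succ) ⟨i, by omega⟩ (by omega) (by simp)]
    rfl
  have e4 : gword (L + 1) (f ∘ Fin.succ) i = f ⟨i, by omega⟩ := by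
    rw [gword_eval (f ∘ Fin.succ) ⟨i - 1, by omega⟩ (by omega) (by simp; omega)]
    show f ((⟨i - 1, by omega⟩ : Fin (L + 1)).succ) = f ⟨i, by omega⟩
    congr 1
    ext
    simp
    omega
  rw [e1, e2, e3, e4]

open Polynomial in
lemma sum_perm_invariant {N : ℕ} (g : Fin N → ℤ) (hg : Function.Injective g) :
    ∑ τ : Equiv.Perm (Fin N), (X : ℤ[X]) ^ descA N (gword N (g ∘ τ))
      = ∑ τ : Equiv.Perm (Fin N), (X : ℤ[X]) ^ descA N (gword N (fun j => ((τ j : ℕ) : ℤ))) := by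
  set ρ := Tuple.sort g with hρ
  have hsm : StrictMono (g ∘ ρ) :=
    (Tuple.monotone_sort g).strictMono_of_injective (hg.comp ρ.injective)
  rw [← Equiv.sum_comp (Equiv.mulLeft ρ)
    (fun τ => (X : ℤ[X]) ^ descA N (gword N (g ∘ τ)))]
  apply Finset.sum_congr rfl
  intro τ _
  congr 1
  have hcomp : g ∘ (Equiv.mulLeft ρ τ) = (g ∘ ρ) ∘ τ := rfl
  rw [hcomp]
  apply descA_gword_congr
  intro x y
  have hlt := hsm.lt_iff_lt (a := τ x) (b := τ y)
  simp only [Function.comp_apply] at hlt ⊢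
  rw [hlt]
  exact ⟨fun hh => by exact_mod_cast Fin.lt_iff_val_lt_val.mp hh,
    fun hh => Fin.lt_iff_val_lt_val.mpr (by exact_mod_cast hh)⟩

open Polynomial in
lemma sum_pow_eq {α : Type*} [Fintype α] [DecidableEq α] (s : Finset α) (stat : α → ℕ) (N : ℕ)
    (h : ∀ a ∈ s, stat a < N) :
    ∑ k ∈ Finset.range N, Polynomial.C (((s.filter (fun a => stat a = k)).card : ℤ)) * X ^ k
      = ∑ a ∈ s, (X : ℤ[X]) ^ stat a := by
  rw [← Finset.sum_fiberwise_of_maps_to (fun a ha => Finset.mem_range.mpr (h a ha))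
    (fun a => (X : ℤ[X]) ^ stat a)]
  refine Finset.sum_congr rfl fun k _ => ?_
  have hin : ∀ a ∈ s.filter (fun a => stat a = k), (X : ℤ[X]) ^ stat a = X ^ k := fun a ha => by
    rw [(Finset.mem_filter.mp ha).2]
  rw [Finset.sum_congr rfl hin, Finset.sum_const, nsmul_eq_mul, map_natCast]

lemma pos_iff {N : ℕ} (m : Mdl N) :
    (∀ i ∈ Finset.Icc 1 N, 0 < wrd N m i) ↔ m.2 = fun _ => true := by
  constructor
  · intro h
    funext k
    have hlt := (m.1.symm k).isLt
    have hmem : ((m.1.symm k : ℕ) + 1) ∈ Finset.Icc 1 N := by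
      rw [Finset.mem_Icc]
      omega
    have hpos := h _ hmem
    rw [wrd_eval m (m.1.symm k) (by omega) rfl] at hpos
    unfold gval at hpos
    rw [Equiv.apply_symm_apply] at hpos
    cases hc : m.2 k
    · rw [hc] at hpos
      simp only [Bool.false_eq_true, if_false, neg_one_mul] at hpos
      exfalso
      have : (0:ℤ) < (k : ℕ) + 1 := by positivity
      omega
    · rfl
  · intro h i hi
    rw [Finset.mem_Icc] at hi
    rw [wrd_eval m ⟨i - 1, by omega⟩ hi.1 (by simp; omega)]
    unfold gval
    rw [h]
    simp only [if_true, one_mul]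
    positivity

lemma card_pairs_eq {N : ℕ} (k : ℕ)
    [DecidablePred fun m : Mdl N =>
      (∀ i ∈ Finset.Icc 1 N, 0 < wrd N m i) ∧ descA N (wrd N m) = k] :
    (Finset.univ.filter (fun m : Mdl N =>
        (∀ i ∈ Finset.Icc 1 N, 0 < wrd N m i) ∧ descA N (wrd N m) = k)).card
      = (Finset.univ.filter (fun τ : Equiv.Perm (Fin N) =>
          descA N (wrd N (τ, fun _ => true)) = k)).card := by
  apply Finset.card_nbij' (fun m => m.1) (fun τ => (τ, fun _ => true))
  · intro m hm
    simp only [Finset.mem_coe, Finset.mem_filter] at hm ⊢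
    obtain ⟨_, hpos, hd⟩ := hm
    have hϵ : m.2 = fun _ => true := (pos_iff m).mp hpos
    have hme : m = (m.1, fun _ => true) := by rw [← hϵ]
    exact ⟨Finset.mem_univ _, by rw [← hme]; exact hd⟩
  · intro τ hτ
    simp only [Finset.mem_coe, Finset.mem_filter] at hτ ⊢
    refine ⟨Finset.mem_univ _, ?_, hτ.2⟩
    exact (pos_iff (τ, fun _ => true)).mpr rfl
  · intro m hm
    simp only [Finset.mem_coe, Finset.mem_filter] at hm
    have hϵ : m.2 = fun _ => true := (pos_iff m).mp hm.2.1
    have hme : m = (m.1, fun _ => true) := by rw [← hϵ]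
    exact hme.symm
  · intro τ _
    rfl

lemma gB_injective {N : ℕ} (ε : Fin N → Bool) :
    Function.Injective (fun k : Fin N => (if ε k then (1:ℤ) else -1) * ((k : ℕ) + 1)) := by
  have habs : ∀ j : Fin N, |(if ε j then (1:ℤ) else -1) * ((j : ℕ) + 1)| = (j : ℕ) + 1 := by
    intro j
    cases hc : ε j
    · simp only [hc, Bool.false_eq_true, if_false, neg_one_mul, abs_neg]
      rw [abs_of_nonneg (by positivity)]
    · simp only [hc, if_true, one_mul]
      rw [abs_of_nonneg (by positivity)]
  intro a b hab
  have hab' : (if ε a then (1:ℤ) else -1) * ((a : ℕ) + 1)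
      = (if ε b then (1:ℤ) else -1) * ((b : ℕ) + 1) := hab
  have h1 := habs a
  rw [hab', habs b] at h1
  ext
  have : ((a : ℕ) : ℤ) = ((b : ℕ) : ℤ) := by omega
  exact_mod_cast this

end StemAux


open Polynomial in
/-- Stembridge's polynomial identity: `D_n(t) = B_n(t) − n·2^{n−1}·t·S_{n−1}(t)` for `n ≥ 2`. -/
theorem stembridge_poly (n : ℕ) (hn : 2 ≤ n) :
    (∑ k ∈ Finset.range (n + 1), C (eulD n k : ℤ) * X ^ k) =
      (∑ k ∈ Finset.range (n + 1), C (eulB n k : ℤ) * X ^ k) -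
        C ((n : ℤ) * 2 ^ (n - 1)) * X *
          (∑ k ∈ Finset.range (n - 1), C (eulA (n - 1) k : ℤ) * X ^ k) := by
  classical
  obtain ⟨L, rfl⟩ : ∃ L, n = L + 2 := ⟨n - 2, by omega⟩
  have hsub : L + 2 - 1 = L + 1 := rfl
  rw [hsub]
  -- abbreviations
  set S : Polynomial ℤ := ∑ τ : Equiv.Perm (Fin (L + 1)),
      (X : Polynomial ℤ) ^ descA (L + 1) (StemAux.wrd (L + 1) (τ, fun _ => true)) with hSdef
  set Ball : Polynomial ℤ := ∑ m : StemAux.Mdl (L + 2),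
      (X : Polynomial ℤ) ^ descB (L + 2) (StemAux.wrd (L + 2) m) with hBdef
  set evens : Finset (StemAux.Mdl (L + 2)) := Finset.univ.filter
      (fun m => IsEvenSigned (L + 2) (StemAux.wrd (L + 2) m)) with hevensdef
  set Deven : Polynomial ℤ := ∑ m ∈ evens,
      (X : Polynomial ℤ) ^ descD (L + 2) (StemAux.wrd (L + 2) m) with hDdef
  set Call : Polynomial ℤ := ∑ m : StemAux.Mdl (L + 2),
      (X : Polynomial ℤ) ^ StemAux.cstat (L + 2) (StemAux.wrd (L + 2) m) with hCalldef
  -- Step A: rewrite the three coefficient sums as statistic sums over the model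
  have hA : (∑ k ∈ Finset.range (L + 1), C (eulA (L + 1) k : ℤ) * X ^ k) = S := by
    have hcount : ∀ k, eulA (L + 1) k = (Finset.univ.filter
        (fun τ : Equiv.Perm (Fin (L + 1)) =>
          descA (L + 1) (StemAux.wrd (L + 1) (τ, fun _ => true)) = k)).card := by
      intro k
      have h0 : {w : ℕ → ℤ | IsPermWord (L + 1) w ∧ descA (L + 1) w = k}
          = {u : ℕ → ℤ | IsSignedPerm (L + 1) u ∧
              ((∀ i ∈ Finset.Icc 1 (L + 1), 0 < u i) ∧ descA (L + 1) u = k)} := by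
        ext u
        simp only [Set.mem_setOf_eq, IsPermWord]
        tauto
      rw [eulA, h0, StemAux.ncard_signed, StemAux.card_pairs_eq]
    have hbound : ∀ τ : Equiv.Perm (Fin (L + 1)), ∀ _ : τ ∈ Finset.univ,
        descA (L + 1) (StemAux.wrd (L + 1) (τ, fun _ => true)) < L + 1 := by
      intro τ _
      have h1 := Finset.card_filter_le (Finset.Icc 1 (L + 1 - 1))
        (fun i => StemAux.wrd (L + 1) (τ, fun _ => true) (i + 1)
          < StemAux.wrd (L + 1) (τ, fun _ => true) i)
      rw [Nat.card_Icc] at h1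
      unfold descA
      omega
    have hs := StemAux.sum_pow_eq Finset.univ
      (fun τ : Equiv.Perm (Fin (L + 1)) =>
        descA (L + 1) (StemAux.wrd (L + 1) (τ, fun _ => true))) (L + 1) hbound
    rw [hSdef, ← hs]
    apply Finset.sum_congr rfl
    intro k _
    rw [hcount k]
  have hB : (∑ k ∈ Finset.range (L + 2 + 1), C (eulB (L + 2) k : ℤ) * X ^ k) = Ball := by
    have hcount : ∀ k, eulB (L + 2) k = (Finset.univ.filter
        (fun m : StemAux.Mdl (L + 2) => descB (L + 2) (StemAux.wrd (L + 2) m) = k)).card :=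
      fun k => StemAux.ncard_signed (L + 2) (fun u => descB (L + 2) u = k)
    have hbound : ∀ m : StemAux.Mdl (L + 2), ∀ _ : m ∈ Finset.univ,
        descB (L + 2) (StemAux.wrd (L + 2) m) < L + 2 + 1 := by
      intro m _
      have h1 := Finset.card_filter_le (Finset.range (L + 2))
        (fun i => StemAux.wrd (L + 2) m (i + 1) < StemAux.wrd (L + 2) m i)
      rw [Finset.card_range] at h1
      unfold descB
      omega
    have hs := StemAux.sum_pow_eq Finset.univ
      (fun m : StemAux.Mdl (L + 2) => descB (L + 2) (StemAux.wrd (L + 2) m)) (L + 2 + 1) hbound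
    rw [hBdef, ← hs]
    apply Finset.sum_congr rfl
    intro k _
    rw [hcount k]
  have hD : (∑ k ∈ Finset.range (L + 2 + 1), C (eulD (L + 2) k : ℤ) * X ^ k) = Deven := by
    have hcount : ∀ k, eulD (L + 2) k = (Finset.univ.filter
        (fun m : StemAux.Mdl (L + 2) => IsEvenSigned (L + 2) (StemAux.wrd (L + 2) m) ∧
          descD (L + 2) (StemAux.wrd (L + 2) m) = k)).card :=
      fun k => StemAux.ncard_signed (L + 2)
        (fun u => IsEvenSigned (L + 2) u ∧ descD (L + 2) u = k)
    have hbound : ∀ m : StemAux.Mdl (L + 2), ∀ _ : m ∈ evens,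
        descD (L + 2) (StemAux.wrd (L + 2) m) < L + 2 + 1 := by
      intro m _
      have h1 := Finset.card_filter_le (Finset.range (L + 2))
        (fun i => StemAux.wrd (L + 2) m (i + 1)
          < (if i = 0 then -(StemAux.wrd (L + 2) m 2) else StemAux.wrd (L + 2) m i))
      rw [Finset.card_range] at h1
      unfold descD
      omega
    have hs := StemAux.sum_pow_eq evens
      (fun m : StemAux.Mdl (L + 2) => descD (L + 2) (StemAux.wrd (L + 2) m)) (L + 2 + 1) hbound
    rw [hDdef, ← hs]
    apply Finset.sum_congr rfl
    intro k _
    rw [hcount k, hevensdef, Finset.filter_filter]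
  rw [hA, hB, hD]
  -- Step B : halving for type D
  have hL1 : 1 ≤ L + 1 := by omega
  have hn2 : 2 ≤ L + 2 := by omega
  have hDall : (∑ m : StemAux.Mdl (L + 2),
      (X : Polynomial ℤ) ^ descD (L + 2) (StemAux.wrd (L + 2) m)) = 2 * Deven := by
    rw [← Finset.sum_filter_add_sum_filter_not Finset.univ
      (fun m : StemAux.Mdl (L + 2) => IsEvenSigned (L + 2) (StemAux.wrd (L + 2) m))
      (fun m => (X : Polynomial ℤ) ^ descD (L + 2) (StemAux.wrd (L + 2) m))]
    have hodd : (∑ m ∈ Finset.univ.filter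
        (fun m : StemAux.Mdl (L + 2) => ¬ IsEvenSigned (L + 2) (StemAux.wrd (L + 2) m)),
        (X : Polynomial ℤ) ^ descD (L + 2) (StemAux.wrd (L + 2) m)) = Deven := by
      rw [hDdef]
      apply Finset.sum_nbij' (StemAux.flip (L + 1)) (StemAux.flip (L + 1))
      · intro m hm
        simp only [Finset.mem_coe, Finset.mem_filter, Finset.mem_univ, true_and, hevensdef] at hm ⊢
        exact (StemAux.evenSigned_flip hL1 m).mpr hm
      · intro m hm
        simp only [Finset.mem_coe, Finset.mem_filter, Finset.mem_univ, true_and, hevensdef] at hm ⊢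
        rw [StemAux.evenSigned_flip hL1]
        exact not_not_intro hm
      · intro m _
        exact StemAux.flip_flip (L + 1) m
      · intro m _
        exact StemAux.flip_flip (L + 1) m
      · intro m _
        rw [StemAux.descD_flip hL1]
    rw [hodd, hDdef]
    ring
  -- Step C : pairing identity
  have hBB : 2 * Ball = (∑ m : StemAux.Mdl (L + 2),
      (X : Polynomial ℤ) ^ descD (L + 2) (StemAux.wrd (L + 2) m)) + X * Call := by
    have hflipsum : Ball = ∑ m : StemAux.Mdl (L + 2),
        (X : Polynomial ℤ) ^ descB (L + 2) (StemAux.wrd (L + 2) (StemAux.flip (L + 1) m)) := by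
      rw [hBdef]
      exact (Equiv.sum_comp (Function.Involutive.toPerm _ (StemAux.flip_flip (L + 1)))
        (fun m => (X : Polynomial ℤ) ^ descB (L + 2) (StemAux.wrd (L + 2) m))).symm
    calc 2 * Ball = Ball + Ball := two_mul Ball
      _ = ∑ m : StemAux.Mdl (L + 2),
          ((X : Polynomial ℤ) ^ descB (L + 2) (StemAux.wrd (L + 2) m)
            + X ^ descB (L + 2) (StemAux.wrd (L + 2) (StemAux.flip (L + 1) m))) := by
          nth_rewrite 2 [hflipsum]
          rw [hBdef, ← Finset.sum_add_distrib]
      _ = ∑ m : StemAux.Mdl (L + 2),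
          ((X : Polynomial ℤ) ^ descD (L + 2) (StemAux.wrd (L + 2) m)
            + X ^ (StemAux.cstat (L + 2) (StemAux.wrd (L + 2) m) + 1)) := by
          apply Finset.sum_congr rfl
          intro m _
          have h0 : StemAux.wrd (L + 2) m 0 = 0 := StemAux.wrd_zero m (by omega)
          have h0' : StemAux.wrd (L + 2) (StemAux.flip (L + 1) m) 0 = 0 :=
            StemAux.wrd_zero _ (by omega)
          rw [StemAux.descB_decomp hn2 _ h0, StemAux.descB_decomp hn2 _ h0', StemAux.descD_decomp hn2,
            StemAux.cstat_flip, StemAux.wrd_flip_one,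
            StemAux.wrd_flip_ne (L + 1) m (by omega : (2:ℕ) ≠ 1)]
          exact StemAux.key_pair _ _ (StemAux.wrd_one_ne_zero m) _
      _ = (∑ m : StemAux.Mdl (L + 2),
          (X : Polynomial ℤ) ^ descD (L + 2) (StemAux.wrd (L + 2) m)) + X * Call := by
          rw [Finset.sum_add_distrib]
          congr 1
          rw [hCalldef, Finset.mul_sum]
          apply Finset.sum_congr rfl
          intro m _
          rw [pow_succ]
          ring
  -- Step D : evaluating the inner-descent sum
  have hC3 : Call = ((L + 2) * 2 ^ (L + 2)) • S := by
    set S0 : Polynomial ℤ := ∑ τ : Equiv.Perm (Fin (L + 1)),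
        (X : Polynomial ℤ) ^ descA (L + 1)
          (StemAux.gword (L + 1) (fun j => ((τ j : ℕ) : ℤ))) with hS0def
    have hS0 : S = S0 := by
      rw [hSdef, hS0def]
      exact StemAux.sum_perm_invariant
        (fun k : Fin (L + 1) => (if true then (1:ℤ) else -1) * ((k : ℕ) + 1))
        (StemAux.gB_injective (fun _ => true))
    have hstep : ∀ (ε : Fin (L + 2) → Bool) (σ : Equiv.Perm (Fin (L + 2))),
        StemAux.cstat (L + 2) (StemAux.wrd (L + 2) (σ, ε))
          = descA (L + 1) (StemAux.gword (L + 1) ((StemAux.gval (L + 2) (σ, ε)) ∘ Fin.succ)) :=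
      fun ε σ => StemAux.cstat_gword (StemAux.gval (L + 2) (σ, ε))
    rw [hCalldef]
    rw [Fintype.sum_prod_type]
    have hswap : (∑ σ : Equiv.Perm (Fin (L + 2)), ∑ ε : Fin (L + 2) → Bool,
        (X : Polynomial ℤ) ^ StemAux.cstat (L + 2) (StemAux.wrd (L + 2) (σ, ε)))
        = ∑ ε : Fin (L + 2) → Bool, ∑ σ : Equiv.Perm (Fin (L + 2)),
        (X : Polynomial ℤ) ^ StemAux.cstat (L + 2) (StemAux.wrd (L + 2) (σ, ε)) :=
      Finset.sum_comm
    rw [hswap]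
    have hinner : ∀ ε : Fin (L + 2) → Bool,
        (∑ σ : Equiv.Perm (Fin (L + 2)),
          (X : Polynomial ℤ) ^ StemAux.cstat (L + 2) (StemAux.wrd (L + 2) (σ, ε)))
        = (L + 2) • S0 := by
      intro ε
      set G : Fin (L + 2) → ℤ := fun k => (if ε k then (1:ℤ) else -1) * ((k : ℕ) + 1) with hGdef
      have h1 : (∑ σ : Equiv.Perm (Fin (L + 2)),
          (X : Polynomial ℤ) ^ StemAux.cstat (L + 2) (StemAux.wrd (L + 2) (σ, ε)))
          = ∑ σ : Equiv.Perm (Fin (L + 2)),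
            (X : Polynomial ℤ) ^ descA (L + 1) (StemAux.gword (L + 1) ((G ∘ σ) ∘ Fin.succ)) := by
        apply Finset.sum_congr rfl
        intro σ _
        rw [hstep ε σ]
        rfl
      rw [h1, ← Equiv.sum_comp (Equiv.Perm.decomposeFin.symm)
        (fun σ : Equiv.Perm (Fin (L + 2)) =>
          (X : Polynomial ℤ) ^ descA (L + 1) (StemAux.gword (L + 1) ((G ∘ σ) ∘ Fin.succ))),
        Fintype.sum_prod_type]
      have h2 : ∀ (p : Fin (L + 2)) (τ : Equiv.Perm (Fin (L + 1))),
          (G ∘ (Equiv.Perm.decomposeFin.symm (p, τ))) ∘ Fin.succ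
            = (G ∘ (Equiv.swap 0 p) ∘ Fin.succ) ∘ τ := by
        intro p τ
        funext x
        simp only [Function.comp_apply, Equiv.Perm.decomposeFin_symm_apply_succ]
      have h3 : ∀ p : Fin (L + 2),
          (∑ τ : Equiv.Perm (Fin (L + 1)),
            (X : Polynomial ℤ) ^ descA (L + 1)
              (StemAux.gword (L + 1) ((G ∘ (Equiv.Perm.decomposeFin.symm (p, τ))) ∘ Fin.succ)))
          = S0 := by
        intro p
        have hrw : ∀ τ : Equiv.Perm (Fin (L + 1)),
            (StemAux.gword (L + 1) ((G ∘ (Equiv.Perm.decomposeFin.symm (p, τ))) ∘ Fin.succ))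
            = StemAux.gword (L + 1) ((G ∘ (Equiv.swap 0 p) ∘ Fin.succ) ∘ τ) := by
          intro τ
          rw [h2 p τ]
        have hinj : Function.Injective (G ∘ (Equiv.swap 0 p) ∘ Fin.succ) := by
          apply Function.Injective.comp
          · exact StemAux.gB_injective ε
          · exact (Equiv.injective _).comp (Fin.succ_injective _)
        calc (∑ τ : Equiv.Perm (Fin (L + 1)),
            (X : Polynomial ℤ) ^ descA (L + 1)
              (StemAux.gword (L + 1) ((G ∘ (Equiv.Perm.decomposeFin.symm (p, τ))) ∘ Fin.succ)))
            = ∑ τ : Equiv.Perm (Fin (L + 1)),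
              (X : Polynomial ℤ) ^ descA (L + 1)
                (StemAux.gword (L + 1) ((G ∘ (Equiv.swap 0 p) ∘ Fin.succ) ∘ τ)) := by
              apply Finset.sum_congr rfl
              intro τ _
              rw [hrw τ]
          _ = S0 := StemAux.sum_perm_invariant (G ∘ (Equiv.swap 0 p) ∘ Fin.succ) hinj
      have h4 : (∑ p : Fin (L + 2), ∑ τ : Equiv.Perm (Fin (L + 1)),
          (X : Polynomial ℤ) ^ descA (L + 1)
            (StemAux.gword (L + 1) ((G ∘ (Equiv.Perm.decomposeFin.symm (p, τ))) ∘ Fin.succ)))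
          = ∑ _p : Fin (L + 2), S0 := by
        apply Finset.sum_congr rfl
        intro p _
        exact h3 p
      rw [h4, Finset.sum_const, Finset.card_univ, Fintype.card_fin]
    have h5 : (∑ ε : Fin (L + 2) → Bool, ∑ σ : Equiv.Perm (Fin (L + 2)),
        (X : Polynomial ℤ) ^ StemAux.cstat (L + 2) (StemAux.wrd (L + 2) (σ, ε)))
        = ∑ _ε : Fin (L + 2) → Bool, (L + 2) • S0 := by
      apply Finset.sum_congr rfl
      intro ε _
      exact hinner ε
    rw [h5, Finset.sum_const, Finset.card_univ]
    have hcard : Fintype.card (Fin (L + 2) → Bool) = 2 ^ (L + 2) := by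
      rw [Fintype.card_fun, Fintype.card_bool, Fintype.card_fin]
    rw [hcard, smul_smul, hS0]
    congr 1
    ring
  -- Final algebra
  have h2ne : (2 : Polynomial ℤ) ≠ 0 := two_ne_zero
  apply mul_left_cancel₀ h2ne
  calc 2 * Deven = ∑ m : StemAux.Mdl (L + 2),
      (X : Polynomial ℤ) ^ descD (L + 2) (StemAux.wrd (L + 2) m) := hDall.symm
    _ = 2 * Ball - X * Call := by rw [hBB]; ring
    _ = 2 * (Ball - C ((↑(L + 2) : ℤ) * 2 ^ (L + 1)) * X * S) := by
        rw [hC3]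
        have hC : C ((↑(L + 2) : ℤ) * 2 ^ (L + 1))
            = ((L + 2 : ℕ) : Polynomial ℤ) * 2 ^ (L + 1) := by
          rw [map_mul, map_pow, map_natCast, map_ofNat]
        rw [hC, nsmul_eq_mul]
        push_cast
        ring
end

section
/- For n ≥ 2, the map u ↦ (|u_1|, u') — where u' is obtained from u_2...u_n by order-preservingly renormalizing absolute values into {1,...,n−1} — is a bijection between the set of non-smooth signed permutations of {1,...,n} and the set of pairs (x, v) with x ∈ {1,...,n} and v a signed permutation of {1,...,n−1}. -/
/-- The unique order-preserving bijection `{±1,...,±n} ∖ {x,−x} → {±1,...,±(n−1)}`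
(for `1 ≤ x ≤ n`), applied letterwise. -/
def renorm (x y : ℤ) : ℤ := if x < y then y - 1 else if y < -x then y + 1 else y

/-- The map `u ↦ (|u_1|, u')`, where `u'` is obtained from `u_2 ⋯ u_n` by
order-preservingly renormalizing absolute values into `{1,...,n−1}`. -/
def chi (n : ℕ) (u : ℕ → ℤ) : ℕ × (ℕ → ℤ) :=
  ((u 1).natAbs, fun i => if 1 ≤ i ∧ i ≤ n - 1 then renorm |u 1| (u (i + 1)) else 0)

def unrenorm (x z : ℤ) : ℤ := if x ≤ z then z + 1 else if z ≤ -x then z - 1 else z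

lemma unrenorm_renorm (x y : ℤ) (hx : 1 ≤ x) (hy : |y| ≠ x) : unrenorm x (renorm x y) = y := by
  simp only [renorm, unrenorm, Int.abs_eq_natAbs] at *
  split_ifs <;> omega

lemma renorm_unrenorm (x z : ℤ) (hx : 1 ≤ x) : renorm x (unrenorm x z) = z := by
  simp only [renorm, unrenorm] at *
  split_ifs <;> omega

lemma renorm_abs (x y m : ℤ) (hx1 : 1 ≤ x) (hx2 : x ≤ m) (hy1 : 1 ≤ |y|) (hy2 : |y| ≤ m)
    (hy : |y| ≠ x) : 1 ≤ |renorm x y| ∧ |renorm x y| ≤ m - 1 := by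
  simp only [renorm, Int.abs_eq_natAbs] at *
  split_ifs <;> omega

lemma unrenorm_abs (x z m : ℤ) (hx1 : 1 ≤ x) (hx2 : x ≤ m) (hz1 : 1 ≤ |z|) (hz2 : |z| ≤ m - 1) :
    1 ≤ |unrenorm x z| ∧ |unrenorm x z| ≤ m ∧ |unrenorm x z| ≠ x := by
  simp only [unrenorm, Int.abs_eq_natAbs] at *
  split_ifs <;> omega

lemma renorm_abs_inj (x y1 y2 : ℤ) (hx : 1 ≤ x) (h1 : |y1| ≠ x) (h2 : |y2| ≠ x)
    (h : |renorm x y1| = |renorm x y2|) : |y1| = |y2| := by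
  simp only [renorm, Int.abs_eq_natAbs] at *
  split_ifs at * <;> omega

lemma unrenorm_abs_inj (x z1 z2 : ℤ) (hx : 1 ≤ x)
    (h : |unrenorm x z1| = |unrenorm x z2|) : |z1| = |z2| := by
  simp only [unrenorm, Int.abs_eq_natAbs] at *
  split_ifs at * <;> omega

lemma renorm_pos (x y : ℤ) (hx : 1 ≤ x) (hy : 0 < y) : 0 < renorm x y := by
  simp only [renorm]; split_ifs <;> omega

lemma renorm_neg (x y : ℤ) (hx : 1 ≤ x) (hy : y < 0) : renorm x y < 0 := by
  simp only [renorm]; split_ifs <;> omega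

lemma unrenorm_pos (x z : ℤ) (hx : 1 ≤ x) (hz : 0 < z) : 0 < unrenorm x z := by
  simp only [unrenorm]; split_ifs <;> omega

lemma unrenorm_neg (x z : ℤ) (hx : 1 ≤ x) (hz : z < 0) : unrenorm x z < 0 := by
  simp only [unrenorm]; split_ifs <;> omega

/-- Inverse of `chi`. -/
def psi (n : ℕ) (p : ℕ × (ℕ → ℤ)) : ℕ → ℤ := fun i =>
  if i = 1 then (if 0 < p.2 1 then -(p.1 : ℤ) else (p.1 : ℤ))
  else if 2 ≤ i ∧ i ≤ n then unrenorm (p.1 : ℤ) (p.2 (i - 1)) else 0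

/-- For `n ≥ 2`, `χ` is a bijection from the non-smooth signed permutations of `{1,...,n}`
to the pairs `(x, v)` with `x ∈ {1,...,n}` and `v` a signed permutation of `{1,...,n−1}`. -/
theorem chi_bijOn (n : ℕ) (hn : 2 ≤ n) :
    Set.BijOn (chi n) {u : ℕ → ℤ | IsSignedPerm n u ∧ u 1 * u 2 < 0}
      {p : ℕ × (ℕ → ℤ) | p.1 ∈ Finset.Icc 1 n ∧ IsSignedPerm (n - 1) p.2} := by
  have hmcast : ((n - 1 : ℕ) : ℤ) = (n : ℤ) - 1 := by omega
  -- `MapsTo chi s t`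
  have hchi : Set.MapsTo (chi n) {u : ℕ → ℤ | IsSignedPerm n u ∧ u 1 * u 2 < 0}
      {p : ℕ × (ℕ → ℤ) | p.1 ∈ Finset.Icc 1 n ∧ IsSignedPerm (n - 1) p.2} := by
    intro u hu
    obtain ⟨⟨hb, hinj, hz⟩, hsign⟩ := hu
    have h1 : (1 : ℕ) ∈ Finset.Icc 1 n := by simp [Finset.mem_Icc]; omega
    obtain ⟨hx1, hxn⟩ := hb 1 h1
    have habs : ∀ i, 2 ≤ i → i ≤ n → |u i| ≠ |u 1| := by
      intro i h2 h3 habs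
      have := hinj i (by simp [Finset.mem_Icc]; omega) 1 h1 habs
      omega
    constructor
    · simp only [chi, Finset.mem_Icc]
      rw [Int.abs_eq_natAbs] at hx1 hxn
      omega
    · refine ⟨?_, ?_, ?_⟩
      · intro i hi
        simp only [Finset.mem_Icc] at hi
        simp only [chi, if_pos hi]
        have hmem : i + 1 ∈ Finset.Icc 1 n := by simp [Finset.mem_Icc]; omega
        obtain ⟨hb1, hb2⟩ := hb (i + 1) hmem
        have := renorm_abs |u 1| (u (i + 1)) (n : ℤ) hx1 hxn hb1 hb2
          (habs (i + 1) (by omega) (by omega))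
        rw [hmcast]
        exact this
      · intro i hi j hj
        simp only [Finset.mem_Icc] at hi hj
        simp only [chi, if_pos hi, if_pos hj]
        intro h
        have h' := renorm_abs_inj |u 1| (u (i + 1)) (u (j + 1)) hx1
          (habs (i + 1) (by omega) (by omega))
          (habs (j + 1) (by omega) (by omega)) h
        have := hinj (i + 1) (by simp [Finset.mem_Icc]; omega)
          (j + 1) (by simp [Finset.mem_Icc]; omega) h'
        omega
      · intro i hi
        simp only [Finset.mem_Icc] at hi
        simp only [chi, if_neg hi]
  -- `MapsTo psi t s`
  have hpsi : Set.MapsTo (psi n) {p : ℕ × (ℕ → ℤ) | p.1 ∈ Finset.Icc 1 n ∧ IsSignedPerm (n - 1) p.2}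
      {u : ℕ → ℤ | IsSignedPerm n u ∧ u 1 * u 2 < 0} := by
    rintro ⟨x, v⟩ ⟨hx, vb, vinj, vz⟩
    simp only [Finset.mem_Icc] at hx
    have hx1 : (1 : ℤ) ≤ (x : ℤ) := by exact_mod_cast hx.1
    have hxn : (x : ℤ) ≤ (n : ℤ) := by exact_mod_cast hx.2
    have hu1 : |psi n (x, v) 1| = (x : ℤ) := by
      simp only [psi, if_pos rfl]
      split_ifs <;> simp
    have huval : ∀ i, 2 ≤ i → i ≤ n → psi n (x, v) i = unrenorm (x : ℤ) (v (i - 1)) := by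
      intro i h2 h3
      simp only [psi]
      rw [if_neg (by omega), if_pos ⟨h2, h3⟩]
    have hvb : ∀ i, 2 ≤ i → i ≤ n → 1 ≤ |v (i - 1)| ∧ |v (i - 1)| ≤ (n : ℤ) - 1 := by
      intro i h2 h3
      have := vb (i - 1) (by simp [Finset.mem_Icc]; omega)
      rw [hmcast] at this
      exact this
    have hub : ∀ i, 2 ≤ i → i ≤ n →
        1 ≤ |psi n (x, v) i| ∧ |psi n (x, v) i| ≤ (n : ℤ) ∧ |psi n (x, v) i| ≠ (x : ℤ) := by
      intro i h2 h3
      rw [huval i h2 h3]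
      exact unrenorm_abs _ _ _ hx1 hxn (hvb i h2 h3).1 (hvb i h2 h3).2
    refine ⟨⟨?_, ?_, ?_⟩, ?_⟩
    · intro i hi
      simp only [Finset.mem_Icc] at hi
      rcases eq_or_ne i 1 with rfl | h1
      · rw [hu1]; omega
      · have := hub i (by omega) hi.2
        omega
    · intro i hi j hj h
      simp only [Finset.mem_Icc] at hi hj
      rcases eq_or_ne i 1 with rfl | h1 <;> rcases eq_or_ne j 1 with rfl | hj1
      · rfl
      · rw [hu1] at h
        exact absurd h.symm (hub j (by omega) hj.2).2.2
      · rw [hu1] at h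
        exact absurd h (hub i (by omega) hi.2).2.2
      · rw [huval i (by omega) hi.2, huval j (by omega) hj.2] at h
        have h' := unrenorm_abs_inj _ _ _ hx1 h
        have := vinj (i - 1) (by simp [Finset.mem_Icc]; omega)
          (j - 1) (by simp [Finset.mem_Icc]; omega) h'
        omega
    · intro i hi
      simp only [Finset.mem_Icc] at hi
      simp only [psi]
      rw [if_neg (by omega), if_neg (by omega)]
    · have hv1 : 1 ≤ |v 1| := (vb 1 (by simp [Finset.mem_Icc]; omega)).1
      have hu2 : psi n (x, v) 2 = unrenorm (x : ℤ) (v 1) := huval 2 le_rfl hn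
      have hp1 : psi n (x, v) 1 = if 0 < v 1 then -(x : ℤ) else (x : ℤ) := by
        simp [psi]
      rcases lt_trichotomy (v 1) 0 with hneg | h0 | hpos
      · rw [hp1, if_neg (by omega), hu2]
        exact mul_neg_of_pos_of_neg (by omega) (unrenorm_neg _ _ hx1 hneg)
      · rw [abs_of_nonneg (le_of_eq h0.symm)] at hv1; omega
      · rw [hp1, if_pos hpos, hu2]
        exact mul_neg_of_neg_of_pos (by omega) (unrenorm_pos _ _ hx1 hpos)
  refine Set.InvOn.bijOn ⟨?_, ?_⟩ hchi hpsi
  · -- left inverse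
    intro u hu
    obtain ⟨⟨hb, hinj, hz⟩, hsign⟩ := hu
    have h1 : (1 : ℕ) ∈ Finset.Icc 1 n := by simp [Finset.mem_Icc]; omega
    obtain ⟨hx1, hxn⟩ := hb 1 h1
    have habs : ∀ i, 2 ≤ i → i ≤ n → |u i| ≠ |u 1| := by
      intro i h2 h3 habs
      have := hinj i (by simp [Finset.mem_Icc]; omega) 1 h1 habs
      omega
    have hcast : (((u 1).natAbs : ℤ)) = |u 1| := (Int.abs_eq_natAbs _).symm
    funext i
    rcases eq_or_ne i 1 with rfl | hi1
    · have e1 : psi n (chi n u) 1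
          = if 0 < (chi n u).2 1 then -(((chi n u).1 : ℤ)) else ((chi n u).1 : ℤ) := by
        simp [psi]
      have e2 : (chi n u).2 1 = renorm |u 1| (u 2) := by
        simp only [chi]
        rw [if_pos (show (1:ℕ) ≤ 1 ∧ 1 ≤ n - 1 by omega)]
      have e3 : ((chi n u).1 : ℤ) = |u 1| := hcast
      rw [e1, e2, e3]
      have hu2 : u 2 ≠ 0 := by
        have := (hb 2 (by simp [Finset.mem_Icc]; omega)).1
        intro h; rw [h] at this; simp at this
      rcases lt_or_gt_of_ne hu2 with hneg | hpos
      · rw [if_neg (by exact not_lt.mpr (le_of_lt (renorm_neg _ _ hx1 hneg)))]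
        have : 0 < u 1 := by nlinarith
        exact abs_of_pos this
      · rw [if_pos (renorm_pos _ _ hx1 hpos)]
        have : u 1 < 0 := by nlinarith
        rw [abs_of_neg this]; ring
    · by_cases hi : 2 ≤ i ∧ i ≤ n
      · simp only [psi, chi, if_neg hi1, if_pos hi,
          if_pos (show 1 ≤ i - 1 ∧ i - 1 ≤ n - 1 by omega)]
        rw [hcast]
        have hii : i - 1 + 1 = i := by omega
        rw [hii]
        exact unrenorm_renorm _ _ hx1 (habs i hi.1 hi.2)
      · simp only [psi, if_neg hi1, if_neg hi]
        exact (hz i (by simp [Finset.mem_Icc]; omega)).symm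
  · -- right inverse
    rintro ⟨x, v⟩ ⟨hx, vb, vinj, vz⟩
    simp only [Finset.mem_Icc] at hx
    have hx1 : (1 : ℤ) ≤ (x : ℤ) := by exact_mod_cast hx.1
    have hu1 : |psi n (x, v) 1| = (x : ℤ) := by
      simp only [psi, if_pos rfl]
      split_ifs <;> simp
    have huval : ∀ i, 2 ≤ i → i ≤ n → psi n (x, v) i = unrenorm (x : ℤ) (v (i - 1)) := by
      intro i h2 h3
      simp only [psi]
      rw [if_neg (by omega), if_pos ⟨h2, h3⟩]
    refine Prod.ext ?_ ?_
    · simp only [chi]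
      have : ((psi n (x, v) 1).natAbs : ℤ) = (x : ℤ) := by rw [Int.natCast_natAbs, hu1]
      exact_mod_cast this
    · funext i
      simp only [chi]
      by_cases hi : 1 ≤ i ∧ i ≤ n - 1
      · rw [if_pos hi, hu1, huval (i + 1) (by omega) (by omega)]
        simp only [Nat.add_sub_cancel]
        exact renorm_unrenorm _ _ hx1
      · rw [if_neg hi]
        exact (vz i (by simp [Finset.mem_Icc]; omega)).symm
end

section
/- For n ≥ 1, B(n,1) = 3^n − n − 1: the number of signed permutations of {1,...,n} with exactly one type B descent is 3^n − n − 1. -/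
open Finset
namespace EulBOne

def dset (n : ℕ) (u : ℕ → ℤ) : Finset ℕ := (Finset.range n).filter (fun i => u (i+1) < u i)

def kk (n : ℕ) (u : ℕ → ℤ) : ℕ := (dset n u).sup id

def enc (n : ℕ) (u : ℕ → ℤ) : Fin n → Fin 3 := fun j =>
  if -((j:ℤ)+1) ∈ (Finset.Icc 1 n).image u then 2
  else if ((j:ℤ)+1) ∈ (Finset.Icc 1 (kk n u)).image u then 0 else 1

def Aset (n : ℕ) (c : Fin n → Fin 3) : Finset ℤ :=
  (Finset.univ.filter (fun j => c j = 0)).image (fun j : Fin n => (j:ℤ)+1)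

def Bset (n : ℕ) (c : Fin n → Fin 3) : Finset ℤ :=
  (Finset.univ.filter (fun j => c j = 1)).image (fun j : Fin n => (j:ℤ)+1) ∪
  (Finset.univ.filter (fun j => c j = 2)).image (fun j : Fin n => -((j:ℤ)+1))

lemma fin3 (x : Fin 3) : x = 0 ∨ x = 1 ∨ x = 2 := by fin_cases x <;> simp

lemma cardA_le (n : ℕ) (c : Fin n → Fin 3) : (Aset n c).card ≤ n := by
  calc (Aset n c).card ≤ (Finset.univ.filter (fun j => c j = 0)).card := Finset.card_image_le
    _ ≤ (Finset.univ : Finset (Fin n)).card := Finset.card_filter_le _ _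
    _ = n := by simp

lemma cardB (n : ℕ) (c : Fin n → Fin 3) : (Bset n c).card = n - (Aset n c).card := by
  have hinj1 : Function.Injective (fun j : Fin n => (j:ℤ)+1) := by
    intro a b h; simp at h; exact Fin.ext (by exact_mod_cast h)
  have hinj2 : Function.Injective (fun j : Fin n => -((j:ℤ)+1)) := by
    intro a b h; simp at h; exact Fin.ext (by exact_mod_cast h)
  have hA : (Aset n c).card = (Finset.univ.filter (fun j => c j = 0)).card :=
    Finset.card_image_of_injective _ hinj1
  have hdisj : Disjoint ((Finset.univ.filter (fun j => c j = 1)).image (fun j : Fin n => (j:ℤ)+1))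
      ((Finset.univ.filter (fun j => c j = 2)).image (fun j : Fin n => -((j:ℤ)+1))) := by
    rw [Finset.disjoint_left]
    intro x hx hy
    simp only [Finset.mem_image, Finset.mem_filter] at hx hy
    obtain ⟨a, _, rfl⟩ := hx
    obtain ⟨b, _, hb⟩ := hy
    have : (0:ℤ) < (a:ℤ)+1 := by positivity
    omega
  have hB : (Bset n c).card = (Finset.univ.filter (fun j => c j = 1)).card
      + (Finset.univ.filter (fun j => c j = 2)).card := by
    rw [Bset, Finset.card_union_of_disjoint hdisj,
      Finset.card_image_of_injective _ hinj1, Finset.card_image_of_injective _ hinj2]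
  have htot : (Finset.univ.filter (fun j => c j = 0)).card
      + (Finset.univ.filter (fun j => c j = 1)).card
      + (Finset.univ.filter (fun j => c j = 2)).card = n := by
    have h1 : (Finset.univ.filter (fun j => c j = 0)).card
        + (Finset.univ.filter (fun j => ¬ (c j = 0))).card = n := by
      rw [Finset.card_filter_add_card_filter_not]; simp
    have h2 : (Finset.univ.filter (fun j => ¬ (c j = 0))).card
        = (Finset.univ.filter (fun j => c j = 1)).card
          + (Finset.univ.filter (fun j => c j = 2)).card := by
      rw [← Finset.card_union_of_disjoint]
      · congr 1
        ext j
        simp only [Finset.mem_filter, Finset.mem_union, Finset.mem_univ, true_and]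
        rcases fin3 (c j) with h | h | h <;> simp [h]
      · rw [Finset.disjoint_left]; intro j hj hj'; simp at hj hj'; rw [hj] at hj'; exact absurd hj' (by decide)
    omega
  omega

def dec (n : ℕ) (c : Fin n → Fin 3) : ℕ → ℤ := fun p =>
  if h1 : 1 ≤ p ∧ p ≤ (Aset n c).card then (Aset n c).orderEmbOfFin rfl ⟨p-1, by omega⟩
  else if h2 : (Aset n c).card + 1 ≤ p ∧ p ≤ n then
    (Bset n c).orderEmbOfFin (cardB n c) ⟨p - (Aset n c).card - 1, by omega⟩
  else 0

def badc (n k : ℕ) : Fin n → Fin 3 := fun j => if (j:ℕ) < k then 0 else 1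

def good (n : ℕ) : Finset (Fin n → Fin 3) :=
  Finset.univ \ (Finset.range (n+1)).image (badc n)

lemma card_good (n : ℕ) : (good n).card = 3^n - (n+1) := by
  have hinj : Set.InjOn (badc n) (Finset.range (n+1)) := by
    intro k hk l hl h
    simp only [Finset.coe_range, Set.mem_Iio] at hk hl
    have key : ∀ a b : ℕ, a < b → b ≤ n → badc n a ≠ badc n b := by
      intro a b hab hbn hEq
      have han : a < n := by omega
      have := congrFun hEq ⟨a, han⟩
      simp [badc, hab] at this
    rcases lt_trichotomy k l with hkl | hkl | hkl
    · exact absurd h (key k l hkl (by omega))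
    · exact hkl
    · exact absurd h.symm (key l k hkl (by omega))
  have hcard : ((Finset.range (n+1)).image (badc n)).card = n + 1 := by
    rw [Finset.card_image_of_injOn hinj, Finset.card_range]
  rw [good, Finset.card_sdiff_of_subset (Finset.subset_univ _), hcard]
  congr 1
  rw [Finset.card_univ, Fintype.card_fun]
  simp

variable {n : ℕ} {c : Fin n → Fin 3}

lemma fincoe_inj {j j' : Fin n} (h : ((j:ℤ)+1) = ((j':ℤ)+1)) : j = j' := by
  apply Fin.ext; omega

lemma memA_iff {j : Fin n} : ((j:ℤ)+1) ∈ Aset n c ↔ c j = 0 := by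
  simp only [Aset, Finset.mem_image, Finset.mem_filter, Finset.mem_univ, true_and]
  constructor
  · rintro ⟨j', hj', hEq⟩; rwa [← fincoe_inj hEq]
  · intro h; exact ⟨j, h, rfl⟩

lemma memB_pos_iff {j : Fin n} : ((j:ℤ)+1) ∈ Bset n c ↔ c j = 1 := by
  simp only [Bset, Finset.mem_union, Finset.mem_image, Finset.mem_filter, Finset.mem_univ, true_and]
  constructor
  · rintro (⟨j', hj', hEq⟩ | ⟨j', hj', hEq⟩)
    · rwa [← fincoe_inj hEq]
    · exfalso; have : (0:ℤ) < (j:ℤ)+1 := by positivity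
      omega
  · intro h; exact Or.inl ⟨j, h, rfl⟩

lemma memB_neg_iff {j : Fin n} : (-((j:ℤ)+1)) ∈ Bset n c ↔ c j = 2 := by
  simp only [Bset, Finset.mem_union, Finset.mem_image, Finset.mem_filter, Finset.mem_univ, true_and]
  constructor
  · rintro (⟨j', hj', hEq⟩ | ⟨j', hj', hEq⟩)
    · exfalso; have : (0:ℤ) < (j':ℤ)+1 := by positivity
      omega
    · have : j' = j := by apply Fin.ext; omega
      rwa [← this]
  · intro h; exact Or.inr ⟨j, h, rfl⟩

lemma mem_shape {x : ℤ} (hx : x ∈ Aset n c ∪ Bset n c) :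
    ∃ j : Fin n, (x = (j:ℤ)+1 ∧ (c j = 0 ∨ c j = 1)) ∨ (x = -((j:ℤ)+1) ∧ c j = 2) := by
  simp only [Aset, Bset, Finset.mem_union, Finset.mem_image, Finset.mem_filter,
    Finset.mem_univ, true_and] at hx
  rcases hx with ⟨j, hj, rfl⟩ | ⟨j, hj, rfl⟩ | ⟨j, hj, rfl⟩
  · exact ⟨j, Or.inl ⟨rfl, Or.inl hj⟩⟩
  · exact ⟨j, Or.inl ⟨rfl, Or.inr hj⟩⟩
  · exact ⟨j, Or.inr ⟨rfl, hj⟩⟩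

lemma mem_bounds {x : ℤ} (hx : x ∈ Aset n c ∪ Bset n c) : 1 ≤ |x| ∧ |x| ≤ n := by
  obtain ⟨j, h⟩ := mem_shape hx
  have hj := j.isLt
  have hjp : (0:ℤ) < (j:ℤ)+1 := by positivity
  have hjn : ((j:ℤ)+1) ≤ n := by omega
  rcases h with ⟨rfl, _⟩ | ⟨rfl, _⟩
  · rw [abs_of_pos hjp]; omega
  · rw [abs_of_neg (by omega)]; constructor <;> omega

lemma memA_pos {x : ℤ} (hx : x ∈ Aset n c) : 0 < x := by
  simp only [Aset, Finset.mem_image, Finset.mem_filter, Finset.mem_univ, true_and] at hx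
  obtain ⟨j, _, rfl⟩ := hx; positivity

lemma abs_inj_AB {x y : ℤ} (hx : x ∈ Aset n c ∪ Bset n c) (hy : y ∈ Aset n c ∪ Bset n c)
    (h : |x| = |y|) : x = y := by
  obtain ⟨j, hjx⟩ := mem_shape hx
  obtain ⟨j', hjy⟩ := mem_shape hy
  have hxabs : |x| = (j:ℤ)+1 := by
    rcases hjx with ⟨rfl, _⟩ | ⟨rfl, _⟩
    · rw [abs_of_pos (by positivity)]
    · have hp : (0:ℤ) < (j:ℤ)+1 := by positivity
      rw [abs_of_neg (by omega)]; ring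
  have hyabs : |y| = (j':ℤ)+1 := by
    rcases hjy with ⟨rfl, _⟩ | ⟨rfl, _⟩
    · rw [abs_of_pos (by positivity)]
    · have hp : (0:ℤ) < (j':ℤ)+1 := by positivity
      rw [abs_of_neg (by omega)]; ring
  have hjj : j = j' := fincoe_inj (by rw [← hxabs, ← hyabs, h])
  subst hjj
  rcases hjx with ⟨rfl, hc⟩ | ⟨rfl, hc⟩ <;> rcases hjy with ⟨rfl, hc'⟩ | ⟨rfl, hc'⟩
  · rfl
  · rcases hc with hc | hc <;> rw [hc] at hc' <;> exact absurd hc' (by decide)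
  · rcases hc' with hc' | hc' <;> rw [hc'] at hc <;> exact absurd hc (by decide)
  · rfl

lemma dec_run1 {p : ℕ} (h1 : 1 ≤ p) (h2 : p ≤ (Aset n c).card) :
    dec n c p = (Aset n c).orderEmbOfFin rfl ⟨p-1, by omega⟩ := by
  rw [dec, dif_pos ⟨h1, h2⟩]

lemma dec_run2 {p : ℕ} (h1 : (Aset n c).card + 1 ≤ p) (h2 : p ≤ n) :
    dec n c p = (Bset n c).orderEmbOfFin (cardB n c) ⟨p - (Aset n c).card - 1, by omega⟩ := by
  rw [dec, dif_neg (by omega), dif_pos ⟨h1, h2⟩]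

lemma dec_zero {p : ℕ} (h : ¬(1 ≤ p ∧ p ≤ n)) : dec n c p = 0 := by
  have := cardA_le n c
  rw [dec, dif_neg (by omega), dif_neg (by omega)]

lemma dec_mem_run1 {p : ℕ} (h1 : 1 ≤ p) (h2 : p ≤ (Aset n c).card) :
    dec n c p ∈ Aset n c := by
  rw [dec_run1 h1 h2]; exact Finset.orderEmbOfFin_mem _ _ _

lemma dec_mem_run2 {p : ℕ} (h1 : (Aset n c).card + 1 ≤ p) (h2 : p ≤ n) :
    dec n c p ∈ Bset n c := by
  rw [dec_run2 h1 h2]; exact Finset.orderEmbOfFin_mem _ _ _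

lemma dec_lt_run1 {p q : ℕ} (h1 : 1 ≤ p) (hpq : p < q) (h2 : q ≤ (Aset n c).card) :
    dec n c p < dec n c q := by
  rw [dec_run1 h1 (by omega), dec_run1 (by omega) h2]
  exact ((Aset n c).orderEmbOfFin rfl).strictMono (by simp [Fin.lt_def]; omega)

lemma dec_lt_run2 {p q : ℕ} (h1 : (Aset n c).card + 1 ≤ p) (hpq : p < q) (h2 : q ≤ n) :
    dec n c p < dec n c q := by
  rw [dec_run2 h1 (by omega), dec_run2 (by omega) h2]
  exact ((Bset n c).orderEmbOfFin (cardB n c)).strictMono (by simp [Fin.lt_def]; omega)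

lemma notAB {x : ℤ} (hA : x ∈ Aset n c) (hB : x ∈ Bset n c) : False := by
  simp only [Aset, Finset.mem_image, Finset.mem_filter, Finset.mem_univ, true_and] at hA
  obtain ⟨j, hj0, rfl⟩ := hA
  rcases (Finset.mem_union.mp hB) with h | h <;>
    simp only [Finset.mem_image, Finset.mem_filter, Finset.mem_univ, true_and] at h
  · obtain ⟨j', hj', hEq⟩ := h
    rw [fincoe_inj hEq] at hj'
    rw [hj0] at hj'; exact absurd hj' (by decide)
  · obtain ⟨j', _, hEq⟩ := h
    have : (0:ℤ) < (j:ℤ)+1 := by positivity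
    have : (0:ℤ) < (j':ℤ)+1 := by positivity
    omega

lemma dec_mem_union {p : ℕ} (h1 : 1 ≤ p) (h2 : p ≤ n) :
    dec n c p ∈ Aset n c ∪ Bset n c := by
  by_cases h : p ≤ (Aset n c).card
  · exact Finset.mem_union_left _ (dec_mem_run1 h1 h)
  · exact Finset.mem_union_right _ (dec_mem_run2 (by omega) h2)

lemma dec_isSignedPerm : IsSignedPerm n (dec n c) := by
  refine ⟨?_, ?_, ?_⟩
  · intro i hi
    rw [Finset.mem_Icc] at hi
    exact mem_bounds (dec_mem_union hi.1 hi.2)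
  · intro p hp q hq habs
    rw [Finset.mem_Icc] at hp hq
    have hEq : dec n c p = dec n c q :=
      abs_inj_AB (dec_mem_union hp.1 hp.2) (dec_mem_union hq.1 hq.2) habs
    by_cases h1 : p ≤ (Aset n c).card <;> by_cases h2 : q ≤ (Aset n c).card
    · rw [dec_run1 hp.1 h1, dec_run1 hq.1 h2] at hEq
      have := ((Aset n c).orderEmbOfFin rfl).injective hEq
      have := Fin.val_eq_of_eq this
      simp at this; omega
    · exfalso
      exact notAB (dec_mem_run1 hp.1 h1) (hEq ▸ dec_mem_run2 (by omega) hq.2)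
    · exfalso
      exact notAB (dec_mem_run1 hq.1 h2) (hEq ▸ dec_mem_run2 (by omega) hp.2)
    · rw [dec_run2 (by omega) hp.2, dec_run2 (by omega) hq.2] at hEq
      have := ((Bset n c).orderEmbOfFin (cardB n c)).injective hEq
      have := Fin.val_eq_of_eq this
      simp at this; omega
  · intro p hp
    rw [Finset.mem_Icc] at hp
    exact dec_zero (by omega)

lemma cardA_eq : (Aset n c).card = (Finset.univ.filter (fun j => c j = 0)).card := by
  apply Finset.card_image_of_injective
  intro a b h; simp at h; exact Fin.ext (by exact_mod_cast h)

lemma good_not_bad (hg : c ∈ good n) {k : ℕ} (hk : k ≤ n) : badc n k ≠ c := by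
  intro h
  rw [good, Finset.mem_sdiff] at hg
  exact hg.2 (Finset.mem_image.mpr ⟨k, Finset.mem_range.mpr (by omega), h⟩)

lemma kA_lt (hg : c ∈ good n) : (Aset n c).card < n := by
  rcases Nat.lt_or_ge (Aset n c).card n with h | h
  · exact h
  exfalso
  have hEq : (Aset n c).card = n := le_antisymm (cardA_le n c) h
  have hall : ∀ j : Fin n, c j = 0 := by
    have : (Finset.univ.filter (fun j => c j = 0)) = Finset.univ := by
      apply Finset.eq_univ_of_card
      rw [← cardA_eq, hEq]; simp
    intro j
    have := Finset.mem_filter.mp (this ▸ Finset.mem_univ j)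
    exact this.2
  apply good_not_bad hg (le_refl n)
  funext j
  simp [badc, j.isLt, hall j]

lemma Bset_nonempty_card (hg : c ∈ good n) : 0 < (Bset n c).card := by
  rw [cardB]; have := kA_lt hg; omega

lemma dec_boundary (hg : c ∈ good n) :
    dec n c ((Aset n c).card + 1) < dec n c (Aset n c).card := by
  set kA := (Aset n c).card with hkA
  have hlt : kA < n := kA_lt hg
  by_contra hcon
  push_neg at hcon
  have hBne : (Bset n c).Nonempty := Finset.card_pos.mp (Bset_nonempty_card hg)
  have hu1 : dec n c (kA + 1) = (Bset n c).min' hBne := by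
    rw [dec_run2 (by omega) (by omega),
      ← Finset.orderEmbOfFin_zero (cardB n c) (by omega)]
    congr 1
    exact Fin.ext (by simp; omega)
  have hminB : ∀ b ∈ Bset n c, (Bset n c).min' hBne ≤ b := fun b hb => Finset.min'_le _ b hb
  rcases Nat.eq_zero_or_pos kA with hk0 | hkpos
  · -- kA = 0 : all of B is positive, c ≡ 1
    have hu0 : dec n c kA = 0 := by rw [hk0]; exact dec_zero (by omega)
    rw [hu0, hu1] at hcon
    have hBpos : ∀ b ∈ Bset n c, 0 < b := by
      intro b hb
      have h1 : 1 ≤ |b| := (mem_bounds (Finset.mem_union_right _ hb)).1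
      have := hminB b hb
      rcases abs_cases b with ⟨h, _⟩ | ⟨h, _⟩ <;> omega
    have hnoA : ∀ j : Fin n, c j ≠ 0 := by
      intro j hj
      have : ((j:ℤ)+1) ∈ Aset n c := memA_iff.mpr hj
      have hcard : 0 < (Aset n c).card := Finset.card_pos.mpr ⟨_, this⟩
      omega
    apply good_not_bad hg (Nat.zero_le n)
    funext j
    rcases fin3 (c j) with h | h | h
    · exact absurd h (hnoA j)
    · simp [badc, h]
    · exfalso
      have := hBpos _ (memB_neg_iff.mpr h)
      have : (0:ℤ) < (j:ℤ)+1 := by positivity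
      omega
  · -- kA ≥ 1 : A.max' < B.min' forces c = badc kA-ish
    have hAne : (Aset n c).Nonempty := Finset.card_pos.mp (by omega)
    have hu0 : dec n c kA = (Aset n c).max' hAne := by
      rw [dec_run1 (by omega) (by omega),
        ← Finset.orderEmbOfFin_last (rfl : (Aset n c).card = (Aset n c).card) (by omega)]
    rw [hu0, hu1] at hcon
    set M := (Aset n c).max' hAne with hM
    have hMA : M ∈ Aset n c := Finset.max'_mem _ _
    have hMpos : 0 < M := memA_pos hMA
    have hMn : M ≤ n := by
      have := mem_bounds (Finset.mem_union_left (Bset n c) hMA)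
      rw [abs_of_pos hMpos] at this; exact this.2
    have hstrict : ∀ b ∈ Bset n c, M < b := by
      intro b hb
      have h1 := hminB b hb
      have : M ≠ b := fun h => notAB (h ▸ hMA) hb
      omega
    apply good_not_bad hg (show M.toNat ≤ n by omega)
    funext j
    have hcongr : c j = 0 ↔ ((j:ℤ)+1) ≤ M := by
      constructor
      · intro h
        exact Finset.le_max' _ _ (memA_iff.mpr h)
      · intro h
        rcases fin3 (c j) with h0 | h1 | h2
        · exact h0
        · exfalso
          have := hstrict _ (memB_pos_iff.mpr h1)
          omega
        · exfalso
          have := hstrict _ (memB_neg_iff.mpr h2)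
          have : (0:ℤ) < (j:ℤ)+1 := by positivity
          omega
    rcases fin3 (c j) with h | h | h
    · have := hcongr.mp h
      have : (j:ℕ) < M.toNat := by omega
      simp [badc, this, h]
    · have : ¬ (((j:ℤ)+1) ≤ M) := fun hc =>
        absurd ((hcongr.mpr hc).symm.trans h) (by decide)
      have : ¬ ((j:ℕ) < M.toNat) := by omega
      simp [badc, this, h]
    · exfalso
      have := hstrict _ (memB_neg_iff.mpr h)
      have : (0:ℤ) < (j:ℤ)+1 := by positivity
      omega

lemma dec_no_descent (hg : c ∈ good n) {i : ℕ} (hi : i < n) (hne : i ≠ (Aset n c).card) :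
    ¬ (dec n c (i+1) < dec n c i) := by
  set kA := (Aset n c).card with hkA
  rcases Nat.eq_zero_or_pos i with rfl | hipos
  · -- i = 0, kA ≥ 1
    have hk1 : 1 ≤ kA := by omega
    have h0 : dec n c 0 = 0 := dec_zero (by omega)
    have h1 : 0 < dec n c 1 := memA_pos (dec_mem_run1 (le_refl 1) hk1)
    simp only [zero_add]
    omega
  rcases Nat.lt_or_ge i kA with h | h
  · exact not_lt_of_gt (dec_lt_run1 hipos (Nat.lt_succ_self i) (by omega))
  · exact not_lt_of_gt (dec_lt_run2 (by omega) (Nat.lt_succ_self i) (by omega))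

lemma dec_dset (hg : c ∈ good n) : dset n (dec n c) = {(Aset n c).card} := by
  ext i
  rw [dset, Finset.mem_filter, Finset.mem_range, Finset.mem_singleton]
  constructor
  · rintro ⟨hi, hd⟩
    by_contra hne
    exact dec_no_descent hg hi hne hd
  · rintro rfl
    exact ⟨kA_lt hg, dec_boundary hg⟩

lemma dec_descB (hg : c ∈ good n) : descB n (dec n c) = 1 := by
  rw [descB, ← dset, dec_dset hg, Finset.card_singleton]



section Recon

lemma mono_run (u : ℕ → ℤ) (a b : ℕ) (h : ∀ i, a ≤ i → i < b → u i ≤ u (i+1)) :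
    ∀ p q, a ≤ p → p ≤ q → q ≤ b → u p ≤ u q := by
  intro p q hap hpq hqb
  induction q with
  | zero =>
    have : p = 0 := by omega
    simp [this]
  | succ q ih =>
    rcases Nat.eq_or_lt_of_le hpq with rfl | hlt
    · exact le_refl _
    · exact le_trans (ih (by omega) (by omega)) (h q (by omega) (by omega))

variable {u : ℕ → ℤ} {K : ℕ}

lemma u_zero (hu : IsSignedPerm n u) : u 0 = 0 := hu.2.2 0 (by simp)

lemma u_inj (hu : IsSignedPerm n u) {p q : ℕ} (hp : 1 ≤ p ∧ p ≤ n) (hq : 1 ≤ q ∧ q ≤ n)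
    (h : u p = u q) : p = q :=
  hu.2.1 p (Finset.mem_Icc.mpr hp) q (Finset.mem_Icc.mpr hq) (by rw [h])

lemma u_abs_pos (hu : IsSignedPerm n u) {p : ℕ} (hp : 1 ≤ p ∧ p ≤ n) : 1 ≤ |u p| :=
  (hu.1 p (Finset.mem_Icc.mpr hp)).1

lemma u_abs_le (hu : IsSignedPerm n u) {p : ℕ} (hp : 1 ≤ p ∧ p ≤ n) : |u p| ≤ n :=
  (hu.1 p (Finset.mem_Icc.mpr hp)).2

lemma no_descent (hdset : dset n u = {K}) {i : ℕ} (hi : i < n) (hne : i ≠ K) :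
    u i ≤ u (i+1) := by
  by_contra hcon
  push_neg at hcon
  have : i ∈ dset n u := Finset.mem_filter.mpr ⟨Finset.mem_range.mpr hi, hcon⟩
  rw [hdset, Finset.mem_singleton] at this
  exact hne this

lemma K_lt (hdset : dset n u = {K}) : K < n := by
  have : K ∈ dset n u := hdset ▸ Finset.mem_singleton_self K
  exact Finset.mem_range.mp (Finset.mem_filter.mp this).1

lemma K_descent (hdset : dset n u = {K}) : u (K+1) < u K := by
  have : K ∈ dset n u := hdset ▸ Finset.mem_singleton_self K
  exact (Finset.mem_filter.mp this).2

lemma kk_eq (hdset : dset n u = {K}) : kk n u = K := by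
  rw [kk, hdset, Finset.sup_singleton, id]

lemma mono_run1 (hdset : dset n u = {K}) :
    ∀ p q, p ≤ q → q ≤ K → u p ≤ u q := by
  intro p q hpq hqK
  have hKn := K_lt hdset
  exact mono_run u 0 K (fun i _ hiK => no_descent hdset (by omega) (by omega))
    p q (by omega) hpq hqK

lemma mono_run2 (hdset : dset n u = {K}) :
    ∀ p q, K+1 ≤ p → p ≤ q → q ≤ n → u p ≤ u q := by
  intro p q h1 hpq hqn
  exact mono_run u (K+1) n (fun i hi hin => no_descent hdset hin (by omega))
    p q h1 hpq hqn

lemma run1_pos (hu : IsSignedPerm n u) (hdset : dset n u = {K}) {p : ℕ}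
    (h1 : 1 ≤ p) (h2 : p ≤ K) : 0 < u p := by
  have hKn := K_lt hdset
  have h0 : u 0 ≤ u p := mono_run1 hdset 0 p (by omega) h2
  rw [u_zero hu] at h0
  have := u_abs_pos hu (p := p) (by omega)
  rcases abs_cases (u p) with ⟨h, _⟩ | ⟨h, _⟩ <;> omega

lemma strict_run1 (hu : IsSignedPerm n u) (hdset : dset n u = {K}) {p q : ℕ}
    (h1 : 1 ≤ p) (hpq : p < q) (h2 : q ≤ K) : u p < u q := by
  have hKn := K_lt hdset
  have hle := mono_run1 hdset p q (by omega) h2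
  have : u p ≠ u q := fun h => by
    have := u_inj hu (p := p) (q := q) (by omega) (by omega) h
    omega
  omega

lemma strict_run2 (hu : IsSignedPerm n u) (hdset : dset n u = {K}) {p q : ℕ}
    (h1 : K+1 ≤ p) (hpq : p < q) (h2 : q ≤ n) : u p < u q := by
  have hle := mono_run2 hdset p q h1 (by omega) h2
  have hKn := K_lt hdset
  have : u p ≠ u q := fun h => by
    have := u_inj hu (p := p) (q := q) (by omega) (by omega) h
    omega
  omega

lemma abs_surj (hu : IsSignedPerm n u) {v : ℤ} (h1 : 1 ≤ v) (h2 : v ≤ n) :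
    ∃ p, 1 ≤ p ∧ p ≤ n ∧ |u p| = v := by
  have habs : ∀ a, |u a| = ((u a).natAbs : ℤ) := fun a => (Int.abs_eq_natAbs _)
  have hmaps : ∀ a ∈ Finset.Icc 1 n, (u a).natAbs ∈ Finset.Icc 1 n := by
    intro a ha
    have h := hu.1 a ha
    rw [habs] at h
    rw [Finset.mem_Icc]
    omega
  have hinj : ∀ a₁ ∈ Finset.Icc 1 n, ∀ a₂ ∈ Finset.Icc 1 n,
      (u a₁).natAbs = (u a₂).natAbs → a₁ = a₂ := by
    intro a ha b hb h
    exact hu.2.1 a ha b hb (by rw [habs, habs]; exact_mod_cast h)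
  have hsurj := Finset.surj_on_of_inj_on_of_card_le (s := Finset.Icc 1 n) (t := Finset.Icc 1 n)
    (fun a _ => (u a).natAbs) (fun a ha => hmaps a ha)
    (fun a₁ a₂ ha₁ ha₂ h => hinj a₁ ha₁ a₂ ha₂ h) (le_refl _)
  obtain ⟨p, hp, hpv⟩ := hsurj v.toNat (Finset.mem_Icc.mpr (by omega))
  rw [Finset.mem_Icc] at hp
  refine ⟨p, hp.1, hp.2, ?_⟩
  rw [habs]
  omega

lemma W_split (hKn : K ≤ n) :
    (Finset.Icc 1 n).image u
      = (Finset.Icc 1 K).image u ∪ (Finset.Icc (K+1) n).image u := by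
  ext y
  simp only [Finset.mem_union, Finset.mem_image, Finset.mem_Icc]
  constructor
  · rintro ⟨p, hp, rfl⟩
    by_cases h : p ≤ K
    · exact Or.inl ⟨p, ⟨hp.1, h⟩, rfl⟩
    · exact Or.inr ⟨p, ⟨by omega, hp.2⟩, rfl⟩
  · rintro (⟨p, hp, rfl⟩ | ⟨p, hp, rfl⟩) <;> exact ⟨p, by omega, rfl⟩

lemma not_both (hu : IsSignedPerm n u) {x : ℤ} (hx : x ∈ (Finset.Icc 1 n).image u)
    (hx' : -x ∈ (Finset.Icc 1 n).image u) : False := by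
  simp only [Finset.mem_image, Finset.mem_Icc] at hx hx'
  obtain ⟨p, hp, rfl⟩ := hx
  obtain ⟨q, hq, hq'⟩ := hx'
  have habs : |u q| = |u p| := by rw [hq', abs_neg]
  have := u_inj hu (p := q) (q := p) (by omega) (by omega)
  have hqp : q = p := hu.2.1 q (Finset.mem_Icc.mpr hq) p (Finset.mem_Icc.mpr hp) habs
  rw [hqp] at hq'
  have := u_abs_pos hu (p := p) (by omega)
  rcases abs_cases (u p) with ⟨h, _⟩ | ⟨h, _⟩ <;> omega

lemma enc_eq_two_iff {j : Fin n} :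
    enc n u j = 2 ↔ -((j:ℤ)+1) ∈ (Finset.Icc 1 n).image u := by
  rw [enc]
  split_ifs with h1 h2
  · exact iff_of_true rfl h1
  · exact iff_of_false (by decide) h1
  · exact iff_of_false (by decide) h1

lemma enc_eq_zero_iff {j : Fin n} :
    enc n u j = 0 ↔ -((j:ℤ)+1) ∉ (Finset.Icc 1 n).image u
      ∧ ((j:ℤ)+1) ∈ (Finset.Icc 1 (kk n u)).image u := by
  rw [enc]
  split_ifs with h1 h2
  · exact iff_of_false (by decide) (fun h => h.1 h1)
  · exact iff_of_true rfl ⟨h1, h2⟩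
  · exact iff_of_false (by decide) (fun h => h2 h.2)

lemma enc_eq_one_iff {j : Fin n} :
    enc n u j = 1 ↔ -((j:ℤ)+1) ∉ (Finset.Icc 1 n).image u
      ∧ ((j:ℤ)+1) ∉ (Finset.Icc 1 (kk n u)).image u := by
  rw [enc]
  split_ifs with h1 h2
  · exact iff_of_false (by decide) (fun h => h.1 h1)
  · exact iff_of_false (by decide) (fun h => h.2 h2)
  · exact iff_of_true rfl ⟨h1, h2⟩

lemma Aset_enc (hu : IsSignedPerm n u) (hdset : dset n u = {K}) :
    Aset n (enc n u) = (Finset.Icc 1 K).image u := by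
  have hKn := K_lt hdset
  ext x
  constructor
  · intro hx
    simp only [Aset, Finset.mem_image, Finset.mem_filter, Finset.mem_univ, true_and] at hx
    obtain ⟨j, hj, rfl⟩ := hx
    rw [enc_eq_zero_iff, kk_eq hdset] at hj
    exact hj.2
  · intro hx
    have hxW : x ∈ (Finset.Icc 1 n).image u := by
      simp only [Finset.mem_image, Finset.mem_Icc] at hx ⊢
      obtain ⟨p, hp, rfl⟩ := hx
      exact ⟨p, by omega, rfl⟩
    have hxpos : 0 < x := by
      simp only [Finset.mem_image, Finset.mem_Icc] at hx
      obtain ⟨p, hp, rfl⟩ := hx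
      exact run1_pos hu hdset hp.1 hp.2
    have hxn : x ≤ n := by
      simp only [Finset.mem_image, Finset.mem_Icc] at hx
      obtain ⟨p, hp, rfl⟩ := hx
      have := u_abs_le hu (p := p) (by omega)
      rcases abs_cases (u p) with ⟨h, _⟩ | ⟨h, _⟩ <;> omega
    have hjlt : x.toNat - 1 < n := by omega
    set j : Fin n := ⟨x.toNat - 1, hjlt⟩ with hj
    have hcast : ((j:ℕ):ℤ) + 1 = x := by
      rw [hj]; simp; omega
    have henc : enc n u j = 0 := by
      rw [enc_eq_zero_iff, kk_eq hdset, hcast]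
      exact ⟨fun h => not_both hu hxW h, hx⟩
    have := memA_iff.mpr henc
    rwa [hcast] at this

lemma Bset_enc (hu : IsSignedPerm n u) (hdset : dset n u = {K}) :
    Bset n (enc n u) = (Finset.Icc (K+1) n).image u := by
  have hKn := K_lt hdset
  ext x
  constructor
  · intro hx
    obtain ⟨j, hsh⟩ := mem_shape (Finset.mem_union_right _ hx)
    rcases hsh with ⟨rfl, hc⟩ | ⟨rfl, hc⟩
    · -- positive shape
      have hc1 : enc n u j = 1 := by
        rcases hc with hc | hc
        · exfalso
          have := memA_iff.mpr hc
          exact notAB this hx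
        · exact hc
      rw [enc_eq_one_iff, kk_eq hdset] at hc1
      have hjn : ((j:ℤ)+1) ≤ n := by have := j.isLt; omega
      obtain ⟨p, hp1, hp2, hpabs⟩ := abs_surj hu (v := (j:ℤ)+1) (by omega) hjn
      have hup : u p = (j:ℤ)+1 := by
        rcases abs_cases (u p) with ⟨h, _⟩ | ⟨h, _⟩
        · omega
        · exfalso
          apply hc1.1
          simp only [Finset.mem_image, Finset.mem_Icc]
          exact ⟨p, by omega, by omega⟩
      have hpK : ¬ (p ≤ K) := by
        intro hpK
        apply hc1.2
        simp only [Finset.mem_image, Finset.mem_Icc]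
        exact ⟨p, ⟨hp1, hpK⟩, hup⟩
      simp only [Finset.mem_image, Finset.mem_Icc]
      exact ⟨p, ⟨by omega, hp2⟩, hup⟩
    · -- negative shape
      rw [enc_eq_two_iff] at hc
      rw [W_split (K := K) (by omega)] at hc
      rcases Finset.mem_union.mp hc with h | h
      · exfalso
        simp only [Finset.mem_image, Finset.mem_Icc] at h
        obtain ⟨p, hp, hpe⟩ := h
        have := run1_pos hu hdset hp.1 hp.2
        have : (0:ℤ) < (j:ℤ)+1 := by positivity
        omega
      · exact h
  · intro hx
    have hxW : x ∈ (Finset.Icc 1 n).image u := by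
      simp only [Finset.mem_image, Finset.mem_Icc] at hx ⊢
      obtain ⟨p, hp, rfl⟩ := hx
      exact ⟨p, by omega, rfl⟩
    obtain ⟨p, hp, hpx⟩ : ∃ p, (K+1 ≤ p ∧ p ≤ n) ∧ u p = x := by
      simp only [Finset.mem_image, Finset.mem_Icc] at hx
      obtain ⟨p, hp, rfl⟩ := hx
      exact ⟨p, hp, rfl⟩
    have habs1 : 1 ≤ |x| := by rw [← hpx]; exact u_abs_pos hu (by omega)
    have habsn : |x| ≤ n := by rw [← hpx]; exact u_abs_le hu (by omega)
    have hjlt : |x|.toNat - 1 < n := by omega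
    set j : Fin n := ⟨|x|.toNat - 1, hjlt⟩ with hj
    have hcast : ((j:ℕ):ℤ) + 1 = |x| := by rw [hj]; simp; omega
    rcases abs_cases x with ⟨hax, hsgn⟩ | ⟨hax, hsgn⟩
    · -- x positive
      have henc : enc n u j = 1 := by
        rw [enc_eq_one_iff, kk_eq hdset, hcast, hax]
        constructor
        · exact fun h => not_both hu hxW h
        · intro h
          simp only [Finset.mem_image, Finset.mem_Icc] at h
          obtain ⟨q, hq, hqx⟩ := h
          have : q = p := u_inj hu (by omega) (by omega) (by rw [hqx, hpx])
          omega
      have := memB_pos_iff.mpr henc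
      rwa [hcast, hax] at this
    · -- x negative
      have henc : enc n u j = 2 := by
        rw [enc_eq_two_iff, hcast, hax]
        simpa using hxW
      have := memB_neg_iff.mpr henc
      rw [hcast, hax] at this
      simpa using this

lemma cardA_enc (hu : IsSignedPerm n u) (hdset : dset n u = {K}) :
    (Aset n (enc n u)).card = K := by
  rw [Aset_enc hu hdset]
  rw [Finset.card_image_of_injOn]
  · rw [Nat.card_Icc]; omega
  · intro p hp q hq h
    rw [Finset.mem_coe, Finset.mem_Icc] at hp hq
    have hKn := K_lt hdset
    exact u_inj hu (by omega) (by omega) h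

lemma recon (hu : IsSignedPerm n u) (hdset : dset n u = {K}) :
    dec n (enc n u) = u := by
  have hKn := K_lt hdset
  have hcA := cardA_enc hu hdset
  funext p
  by_cases h1 : 1 ≤ p ∧ p ≤ K
  · rw [dec_run1 h1.1 (by omega)]
    have hf : (fun t : Fin ((Aset n (enc n u)).card) => u (t.val + 1))
        = (Aset n (enc n u)).orderEmbOfFin rfl := by
      apply Finset.orderEmbOfFin_unique
      · intro t
        have htl := t.isLt
        have : u (t.val + 1) ∈ (Finset.Icc 1 K).image u := by
          simp only [Finset.mem_image, Finset.mem_Icc]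
          exact ⟨t.val + 1, by omega, rfl⟩
        rwa [← Aset_enc hu hdset] at this
      · intro s t hst
        have hst' : s.val < t.val := Fin.lt_def.mp hst
        have htl := t.isLt
        exact strict_run1 hu hdset (by omega) (by omega) (by omega)
    rw [← hf]
    simp only
    congr 1
    omega
  · by_cases h2 : K + 1 ≤ p ∧ p ≤ n
    · rw [dec_run2 (by omega) h2.2]
      have hf : (fun t : Fin (n - (Aset n (enc n u)).card) => u (K + 1 + t.val))
          = (Bset n (enc n u)).orderEmbOfFin (cardB n (enc n u)) := by
        apply Finset.orderEmbOfFin_unique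
        · intro t
          have htl := t.isLt
          have hcB : (Bset n (enc n u)).card = n - K := by rw [cardB, hcA]
          have : u (K + 1 + t.val) ∈ (Finset.Icc (K+1) n).image u := by
            simp only [Finset.mem_image, Finset.mem_Icc]
            exact ⟨K + 1 + t.val, by omega, rfl⟩
          rwa [← Bset_enc hu hdset] at this
        · intro s t hst
          have hst' : s.val < t.val := Fin.lt_def.mp hst
          have htl := t.isLt
          exact strict_run2 hu hdset (by omega) (by omega) (by omega)
      rw [← hf]
      simp only
      congr 1
      omega
    · rw [dec_zero (by omega)]
      exact (hu.2.2 p (by rw [Finset.mem_Icc]; omega)).symm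

end Recon

section EncDec

variable {c : Fin n → Fin 3}

lemma image_run1 : (Finset.Icc 1 (Aset n c).card).image (dec n c) = Aset n c := by
  apply Finset.Subset.antisymm
  · intro x hx
    simp only [Finset.mem_image, Finset.mem_Icc] at hx
    obtain ⟨p, hp, rfl⟩ := hx
    exact dec_mem_run1 hp.1 hp.2
  · intro a ha
    have : a ∈ Set.range ((Aset n c).orderEmbOfFin rfl) := by
      rw [Finset.range_orderEmbOfFin]; exact ha
    obtain ⟨t, ht⟩ := this
    simp only [Finset.mem_image, Finset.mem_Icc]
    have htl := t.isLt
    refine ⟨t.val + 1, by omega, ?_⟩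
    rw [dec_run1 (by omega) (by omega), ← ht]
    congr 1

lemma image_run2 : (Finset.Icc ((Aset n c).card + 1) n).image (dec n c) = Bset n c := by
  apply Finset.Subset.antisymm
  · intro x hx
    simp only [Finset.mem_image, Finset.mem_Icc] at hx
    obtain ⟨p, hp, rfl⟩ := hx
    exact dec_mem_run2 hp.1 hp.2
  · intro a ha
    have : a ∈ Set.range ((Bset n c).orderEmbOfFin (cardB n c)) := by
      rw [Finset.range_orderEmbOfFin]; exact ha
    obtain ⟨t, ht⟩ := this
    simp only [Finset.mem_image, Finset.mem_Icc]
    have htl := t.isLt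
    have hcAn := cardA_le n c
    refine ⟨(Aset n c).card + 1 + t.val, by omega, ?_⟩
    rw [dec_run2 (by omega) (by omega), ← ht]
    congr 1
    apply Fin.ext
    simp only [Fin.val_mk]
    omega

lemma negmem_iff {j : Fin n} :
    (-((j:ℤ)+1) ∈ Aset n c ∪ Bset n c) ↔ c j = 2 := by
  constructor
  · intro h
    obtain ⟨j', hsh⟩ := mem_shape h
    rcases hsh with ⟨hEq, _⟩ | ⟨hEq, hc⟩
    · exfalso
      have h1 : (0:ℤ) < (j:ℤ)+1 := by positivity
      have h2 : (0:ℤ) < (j':ℤ)+1 := by positivity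
      omega
    · have : j' = j := by apply Fin.ext; omega
      rwa [← this]
  · intro h
    exact Finset.mem_union_right _ (memB_neg_iff.mpr h)

lemma enc_dec (hg : c ∈ good n) : enc n (dec n c) = c := by
  have hu : IsSignedPerm n (dec n c) := dec_isSignedPerm
  have hdset : dset n (dec n c) = {(Aset n c).card} := dec_dset hg
  have hW : (Finset.Icc 1 n).image (dec n c) = Aset n c ∪ Bset n c := by
    rw [W_split (K := (Aset n c).card) (by have := cardA_le n c; omega),
      image_run1, image_run2]
  have hF : (Finset.Icc 1 (kk n (dec n c))).image (dec n c) = Aset n c := by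
    rw [kk_eq hdset, image_run1]
  funext j
  rcases fin3 (c j) with h | h | h <;> rw [h]
  · rw [enc_eq_zero_iff, hW, hF]
    refine ⟨?_, memA_iff.mpr h⟩
    intro hneg
    rw [negmem_iff, h] at hneg
    exact absurd hneg (by decide)
  · rw [enc_eq_one_iff, hW, hF]
    constructor
    · intro hneg
      rw [negmem_iff, h] at hneg
      exact absurd hneg (by decide)
    · intro hpos
      rw [memA_iff, h] at hpos
      exact absurd hpos (by decide)
  · rw [enc_eq_two_iff, hW]
    exact negmem_iff.mpr h

end EncDec

section Badc

lemma badc_ne_two {k : ℕ} {j : Fin n} : badc n k j ≠ 2 := by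
  rw [badc]
  split_ifs <;> decide

lemma Aset_badc {k : ℕ} (hk : k ≤ n) : Aset n (badc n k) = Finset.Icc (1:ℤ) k := by
  ext x
  simp only [Finset.mem_Icc]
  constructor
  · intro hx
    simp only [Aset, Finset.mem_image, Finset.mem_filter, Finset.mem_univ, true_and] at hx
    obtain ⟨j, hj, rfl⟩ := hx
    rw [badc] at hj
    split_ifs at hj with hsplit
    · constructor
      · omega
      · omega
    · exact absurd hj (by decide)
  · intro hx
    have hjlt : x.toNat - 1 < n := by omega
    have hcast : ((⟨x.toNat - 1, hjlt⟩ : Fin n) : ℤ) + 1 = x := by simp; omega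
    have : badc n k ⟨x.toNat - 1, hjlt⟩ = 0 := by
      rw [badc]
      split_ifs with hs
      · rfl
      · exfalso; simp at hs; omega
    have := memA_iff.mpr this
    rwa [hcast] at this

lemma Bset_badc {k : ℕ} (hk : k ≤ n) : Bset n (badc n k) = Finset.Icc ((k:ℤ)+1) n := by
  ext x
  simp only [Finset.mem_Icc]
  constructor
  · intro hx
    obtain ⟨j, hsh⟩ := mem_shape (Finset.mem_union_right _ hx)
    rcases hsh with ⟨rfl, hc⟩ | ⟨rfl, hc⟩
    · have h1 : badc n k j = 1 := by
        rcases hc with hc | hc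
        · exfalso; exact notAB (memA_iff.mpr hc) hx
        · exact hc
      rw [badc] at h1
      split_ifs at h1 with hs
      · exact absurd h1 (by decide)
      · simp at hs
        have := j.isLt
        constructor <;> omega
    · exact absurd hc badc_ne_two
  · intro hx
    have hjlt : x.toNat - 1 < n := by omega
    have hcast : ((⟨x.toNat - 1, hjlt⟩ : Fin n) : ℤ) + 1 = x := by simp; omega
    have : badc n k ⟨x.toNat - 1, hjlt⟩ = 1 := by
      rw [badc]
      split_ifs with hs
      · exfalso; simp at hs; omega
      · rfl
    have := memB_pos_iff.mpr this
    rwa [hcast] at this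

lemma cardA_badc {k : ℕ} (hk : k ≤ n) : (Aset n (badc n k)).card = k := by
  rw [Aset_badc hk, Int.card_Icc]
  omega

lemma dec_badc_id {k : ℕ} (hk : k ≤ n) {p : ℕ} (h1 : 1 ≤ p) (h2 : p ≤ n) :
    dec n (badc n k) p = p := by
  have hcA := cardA_badc (n := n) hk
  by_cases hp : p ≤ k
  · rw [dec_run1 h1 (by omega)]
    have hf : (fun t : Fin ((Aset n (badc n k)).card) => ((t:ℤ) + 1))
        = (Aset n (badc n k)).orderEmbOfFin rfl := by
      apply Finset.orderEmbOfFin_unique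
      · intro t
        have := t.isLt
        have hmem : ((t:ℤ) + 1) ∈ Finset.Icc (1:ℤ) k := by
          rw [Finset.mem_Icc]; omega
        rwa [← Aset_badc hk] at hmem
      · intro s t hst
        have := Fin.lt_def.mp hst
        dsimp only
        omega
    rw [← hf]
    simp
    omega
  · rw [dec_run2 (by omega) h2]
    have hcB : (Bset n (badc n k)).card = n - k := by rw [cardB, hcA]
    have hf : (fun t : Fin (n - (Aset n (badc n k)).card) => ((k:ℤ) + 1 + (t:ℤ)))
        = (Bset n (badc n k)).orderEmbOfFin (cardB n (badc n k)) := by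
      apply Finset.orderEmbOfFin_unique
      · intro t
        have := t.isLt
        have hmem : ((k:ℤ) + 1 + (t:ℤ)) ∈ Finset.Icc ((k:ℤ)+1) n := by
          rw [Finset.mem_Icc]; constructor <;> omega
        rwa [← Bset_badc hk] at hmem
      · intro s t hst
        have := Fin.lt_def.mp hst
        dsimp only
        omega
    rw [← hf]
    simp
    omega

lemma dec_badc_descB {k : ℕ} (hk : k ≤ n) : descB n (dec n (badc n k)) = 0 := by
  rw [descB, Finset.card_eq_zero, Finset.filter_eq_empty_iff]
  intro i hi
  rw [Finset.mem_range] at hi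
  rcases Nat.eq_zero_or_pos i with rfl | hipos
  · have ha := dec_badc_id (n := n) hk (p := 0+1) (by omega) (by omega)
    rw [dec_zero (show ¬ (1 ≤ 0 ∧ 0 ≤ n) by omega), ha]
    push_neg
    exact_mod_cast Nat.zero_le _
  · have ha := dec_badc_id (n := n) hk (p := i+1) (by omega) (by omega)
    have hb := dec_badc_id (n := n) hk (p := i) (by omega) (by omega)
    rw [ha, hb]
    push_neg
    exact_mod_cast Nat.le_succ i

end Badc

end EulBOne

/-- For `n ≥ 1`, the number of signed permutations of `{1,...,n}` with exactly one
type B descent is `3^n − n − 1`. -/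
theorem eulB_one (n : ℕ) (hn : 1 ≤ n) : (eulB n 1 : ℤ) = 3 ^ n - n - 1 := by
  classical
  set S : Set (ℕ → ℤ) := {u : ℕ → ℤ | IsSignedPerm n u ∧ descB n u = 1} with hS
  have hrecon : ∀ u ∈ S, EulBOne.dec n (EulBOne.enc n u) = u := by
    intro u hu
    obtain ⟨K, hK⟩ := Finset.card_eq_one.mp (show (EulBOne.dset n u).card = 1 from hu.2)
    exact EulBOne.recon hu.1 hK
  have hinj : Set.InjOn (EulBOne.enc n) S := by
    intro u hu v hv h
    rw [← hrecon u hu, ← hrecon v hv, h]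
  have himg : EulBOne.enc n '' S = ↑(EulBOne.good n) := by
    apply Set.eq_of_subset_of_subset
    · rintro c ⟨u, hu, rfl⟩
      rw [Finset.mem_coe, EulBOne.good, Finset.mem_sdiff]
      refine ⟨Finset.mem_univ _, ?_⟩
      intro hbad
      obtain ⟨k, hk, hkeq⟩ := Finset.mem_image.mp hbad
      rw [Finset.mem_range] at hk
      have hueq : EulBOne.dec n (EulBOne.badc n k) = u := by
        rw [hkeq]; exact hrecon u hu
      have h0 : descB n u = 0 := by
        rw [← hueq]; exact EulBOne.dec_badc_descB (by omega)
      have h1 : descB n u = 1 := hu.2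
      omega
    · intro c hc
      rw [Finset.mem_coe] at hc
      exact ⟨EulBOne.dec n c, ⟨EulBOne.dec_isSignedPerm, EulBOne.dec_descB hc⟩,
        EulBOne.enc_dec hc⟩
  have hcount : eulB n 1 = (EulBOne.good n).card := by
    rw [eulB, ← hS, ← Set.ncard_coe_finset, ← himg, Set.ncard_image_of_injOn hinj]
  rw [hcount, EulBOne.card_good]
  have h3 : n + 1 ≤ 3 ^ n := Nat.lt_pow_self (by norm_num)
  rw [Nat.cast_sub h3]
  push_cast
  ring
end

section
/- For a simple graph (V,E) with a total order < on V, the following are equivalent: (i) (V,E) is a threshold graph (its vicinal preorder is total) and < is a degree ordering (u < v implies deg(v) ≤ deg(u)); (ii) for all u, v, if u < v then N(v) ⊆ N(u) ∪ {u}. Moreover, if these hold, every neighbourhood N(u) is a downset in the sense that v ∈ N(u), w ≠ u, and w < v imply w ∈ N(u). -/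
/-- For a finite simple graph with a linear order on its vertices, the following are
equivalent: (i) the vicinal preorder is total (the graph is threshold) and the order is a
degree ordering; (ii) `u < v` implies `N(v) ⊆ N(u) ∪ {u}`. Moreover, in this case every
neighbourhood is a downset: `v ∈ N(u)`, `w ≠ u`, `w < v` imply `w ∈ N(u)`. -/
theorem threshold_degreeOrdering_characterization {V : Type*} [Fintype V] [LinearOrder V]
    (G : SimpleGraph V) :
    (((∀ a b : V, G.neighborSet a ⊆ G.neighborSet b ∪ {b} ∨
        G.neighborSet b ⊆ G.neighborSet a ∪ {a}) ∧
      (∀ a b : V, a < b → (G.neighborSet b).ncard ≤ (G.neighborSet a).ncard)) ↔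
      (∀ a b : V, a < b → G.neighborSet b ⊆ G.neighborSet a ∪ {a})) ∧
    ((∀ a b : V, a < b → G.neighborSet b ⊆ G.neighborSet a ∪ {a}) →
      ∀ u v w : V, v ∈ G.neighborSet u → w ≠ u → w < v → w ∈ G.neighborSet u) := by
  constructor
  · constructor
    · rintro ⟨htot, hdeg⟩ a b hab
      rcases htot a b with h | h
      · -- N(a) ⊆ N(b) ∪ {b}; use degree bound to get N(b) ⊆ N(a) ∪ {a}
        have hcard := hdeg a b hab
        intro x hx
        by_contra hx'
        simp only [Set.mem_union, Set.mem_singleton_iff, not_or] at hx'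
        obtain ⟨hxa, hxna⟩ := hx'
        have hsub : G.neighborSet a \ {b} ⊆ G.neighborSet b \ {x} := by
          rintro y ⟨hy, hyb⟩
          rcases h hy with h' | h'
          · exact ⟨h', fun hyx => hxa (hyx ▸ hy)⟩
          · exact absurd h' hyb
        have hbfin : (G.neighborSet b).Finite := Set.toFinite _
        have hafin : (G.neighborSet a).Finite := Set.toFinite _
        have hbx : (G.neighborSet b \ {x}).ncard = (G.neighborSet b).ncard - 1 :=
          Set.ncard_diff_singleton_of_mem hx
        have hone : 1 ≤ (G.neighborSet b).ncard :=
          by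
          have : (G.neighborSet b).Nonempty := ⟨x, hx⟩
          have := this.ncard_pos hbfin
          omega
        have hbmem : b ∈ G.neighborSet a := by
          by_contra hb
          have heq : G.neighborSet a \ {b} = G.neighborSet a := by
            apply Set.diff_singleton_eq_self
            exact hb
          have := Set.ncard_le_ncard hsub hbfin.diff
          rw [heq, hbx] at this
          omega
        have hab' : (G.neighborSet a \ {b}).ncard = (G.neighborSet a).ncard - 1 :=
          Set.ncard_diff_singleton_of_mem hbmem
        have hle : (G.neighborSet b \ {x}).ncard ≤ (G.neighborSet a \ {b}).ncard := by
          rw [hab', hbx]; omega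
        have heq : G.neighborSet a \ {b} = G.neighborSet b \ {x} :=
          Set.eq_of_subset_of_ncard_le hsub hle hbfin.diff
        have hamem : a ∈ G.neighborSet b := by
          rw [SimpleGraph.mem_neighborSet] at hbmem ⊢
          exact hbmem.symm
        have : a ∈ G.neighborSet a \ {b} := by
          rw [heq]
          exact ⟨hamem, fun h' => hxna h'.symm⟩
        exact (G.irrefl this.1)
      · exact fun x hx => h hx
    · intro hii
      constructor
      · intro a b
        rcases lt_trichotomy a b with h | h | h
        · exact Or.inr (hii a b h)
        · subst h; exact Or.inl (fun x hx => Or.inl hx)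
        · exact Or.inl (hii b a h)
      · intro a b hab
        have h := hii a b hab
        by_cases ha : a ∈ G.neighborSet b
        · have hbmem : b ∈ G.neighborSet a := by
            rw [SimpleGraph.mem_neighborSet] at ha ⊢
            exact ha.symm
          have hsub : G.neighborSet b ⊆ (G.neighborSet a ∪ {a}) \ {b} := by
            intro x hx
            exact ⟨h hx, fun hxb => G.irrefl (hxb ▸ hx)⟩
          have hfin : (G.neighborSet a ∪ {a}).Finite := Set.toFinite _
          have h1 : ((G.neighborSet a ∪ {a}) \ {b}).ncard
              = (G.neighborSet a ∪ {a}).ncard - 1 :=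
            Set.ncard_diff_singleton_of_mem (Set.mem_union_left _ hbmem)
          have h2 : (G.neighborSet a ∪ {a}).ncard = (G.neighborSet a).ncard + 1 := by
            rw [Set.union_singleton]
            exact Set.ncard_insert_of_notMem (fun h' => G.irrefl h') (Set.toFinite _)
          have := Set.ncard_le_ncard hsub hfin.diff
          omega
        · have hsub : G.neighborSet b ⊆ G.neighborSet a := by
            intro x hx
            rcases h hx with h' | h'
            · exact h'
            · exact absurd (h' ▸ hx) ha
          exact Set.ncard_le_ncard hsub (Set.toFinite _)
  · intro hii u v w hv hwu hwv
    have h := hii w v hwv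
    have hu : u ∈ G.neighborSet v := by
      rw [SimpleGraph.mem_neighborSet] at hv ⊢
      exact hv.symm
    rcases h hu with h' | h'
    · rw [SimpleGraph.mem_neighborSet] at h' ⊢
      exact h'.symm
    · exact absurd (Set.mem_singleton_iff.1 h').symm hwu
end

section
/- Let f : {0,1,...,n} → {0,1,...,n} be a self-adjoint height function (antitone, f(0) = n, and y ≤ f(x) iff x ≤ f(y) for all x,y). Define E_f = { {x,y} : x,y ∈ {1,...,n}, x ≠ y, y ≤ f(x) }. Then ({1,...,n}, E_f) is a threshold graph and the standard linear order on {1,...,n} is a degree ordering for it (larger vertices have weakly smaller degree). -/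
/-- The graph `({1,...,n}, E_f)` determined by a (self-adjoint) height function `f` on
`{0,...,n}`: vertex `i : Fin n` stands for `i+1`, and distinct `x, y` are adjacent iff
`y ≤ f x` (symmetrized via `fromRel`; when `f` is self-adjoint the relation is already
symmetric). -/
def graphOfHeight (n : ℕ) (f : Fin (n + 1) → Fin (n + 1)) : SimpleGraph (Fin n) :=
  SimpleGraph.fromRel
    (fun i j => (j : ℕ) + 1 ≤ (f ⟨(i : ℕ) + 1, Nat.succ_lt_succ i.isLt⟩ : ℕ))

lemma graphOfHeight_key (n : ℕ) (f : Fin (n + 1) → Fin (n + 1)) (hf : Antitone f)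
    {a b : Fin n} (hab : a ≤ b) :
    (graphOfHeight n f).neighborSet b ⊆ (graphOfHeight n f).neighborSet a ∪ {a} := by
  intro c hc
  by_cases hca : c = a
  · exact Or.inr (by simp [hca])
  · left
    simp only [graphOfHeight, SimpleGraph.mem_neighborSet, SimpleGraph.fromRel_adj] at hc ⊢
    obtain ⟨hbc, hr⟩ := hc
    have hle : (f ⟨(b : ℕ) + 1, Nat.succ_lt_succ b.isLt⟩ : Fin (n+1)) ≤
        f ⟨(a : ℕ) + 1, Nat.succ_lt_succ a.isLt⟩ := by
      apply hf
      exact Nat.succ_le_succ hab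
    refine ⟨fun h => hca h.symm, ?_⟩
    rcases hr with h | h
    · exact Or.inl (le_trans h hle)
    · exact Or.inr (le_trans (Nat.succ_le_succ hab) h)

/-- If `f` is a self-adjoint height function on `{0,...,n}`, then `({1,...,n}, E_f)` is a
threshold graph (its vicinal preorder is total) and the standard linear order is a degree
ordering for it (larger vertices have weakly smaller degree). -/
theorem graphOfHeight_threshold (n : ℕ) (f : Fin (n + 1) → Fin (n + 1))
    (hf : Antitone f) (h0 : f 0 = Fin.last n) (hsa : ∀ x y, y ≤ f x ↔ x ≤ f y) :
    (∀ a b : Fin n,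
      (graphOfHeight n f).neighborSet a ⊆ (graphOfHeight n f).neighborSet b ∪ {b} ∨
      (graphOfHeight n f).neighborSet b ⊆ (graphOfHeight n f).neighborSet a ∪ {a}) ∧
    (∀ a b : Fin n, a ≤ b →
      ((graphOfHeight n f).neighborSet b).ncard ≤ ((graphOfHeight n f).neighborSet a).ncard) := by
  constructor
  · intro a b
    rcases le_total a b with h | h
    · exact Or.inr (graphOfHeight_key n f hf h)
    · exact Or.inl (graphOfHeight_key n f hf h)
  · intro a b hab
    have hmap : Set.MapsTo (Equiv.swap a b) ((graphOfHeight n f).neighborSet b)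
        ((graphOfHeight n f).neighborSet a) := by
      intro c hc
      by_cases hca : c = a
      · subst hca
        rw [Equiv.swap_apply_left]
        exact ((graphOfHeight n f).adj_symm hc : _)
      · have hcb : c ≠ b := fun h => ((graphOfHeight n f).ne_of_adj hc) h.symm
        rw [Equiv.swap_apply_of_ne_of_ne hca hcb]
        rcases graphOfHeight_key n f hf hab hc with h | h
        · exact h
        · exact absurd h hca
    exact Set.ncard_le_ncard_of_injOn _ hmap ((Equiv.swap a b).injective.injOn) (Set.toFinite _)
end

section
/- The number of unlabeled threshold graphs on n ≥ 1 vertices is 2^{n−1}. -/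
open Finset SimpleGraph

def Gr {n : ℕ} (s : Fin n → Bool) : SimpleGraph (Fin n) where
  Adj i j := i ≠ j ∧ s (max i j) = true
  symm := ⟨fun i j ⟨h1, h2⟩ => ⟨h1.symm, by rwa [max_comm]⟩⟩
  loopless := ⟨fun i ⟨h1, _⟩ => h1 rfl⟩

instance {n : ℕ} {s : Fin n → Bool} : DecidableRel (Gr s).Adj :=
  fun _ _ => instDecidableAnd

lemma Gr_adj {n : ℕ} {s : Fin n → Bool} {i j : Fin n} :
    (Gr s).Adj i j ↔ i ≠ j ∧ s (max i j) = true := Iff.rfl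

lemma Gr_sub_true {n : ℕ} {s : Fin n → Bool} {a b : Fin n} (hab : a < b) (hb : s b = true) :
    (Gr s).neighborSet a ⊆ (Gr s).neighborSet b ∪ {b} := by
  intro k hk
  obtain ⟨hka, hmax⟩ := hk
  by_cases hkb : k = b
  · exact Or.inr hkb
  · left
    refine ⟨Ne.symm hkb, ?_⟩
    rcases lt_trichotomy k b with h | h | h
    · rwa [max_eq_left h.le]
    · exact absurd h hkb
    · rw [max_eq_right h.le]
      rwa [max_eq_right (lt_trans hab h).le] at hmax

lemma Gr_sub_false {n : ℕ} {s : Fin n → Bool} {a b : Fin n} (hab : a < b) (hb : s b = false) :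
    (Gr s).neighborSet b ⊆ (Gr s).neighborSet a ∪ {a} := by
  intro k hk
  obtain ⟨hkb, hmax⟩ := hk
  have hbk : b < k := by
    rcases lt_trichotomy k b with h | h | h
    · rw [max_eq_left h.le, hb] at hmax; exact absurd hmax (by simp)
    · exact absurd h.symm hkb
    · exact h
  rw [max_eq_right hbk.le] at hmax
  left
  refine ⟨(lt_trans hab hbk).ne, ?_⟩
  rwa [max_eq_right (lt_trans hab hbk).le]

lemma Gr_threshold {n : ℕ} (s : Fin n → Bool) (a b : Fin n) :
    (Gr s).neighborSet a ⊆ (Gr s).neighborSet b ∪ {b} ∨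
      (Gr s).neighborSet b ⊆ (Gr s).neighborSet a ∪ {a} := by
  rcases lt_trichotomy a b with h | rfl | h
  · cases hb : s b
    · exact Or.inr (Gr_sub_false h hb)
    · exact Or.inl (Gr_sub_true h hb)
  · exact Or.inl (fun k hk => Or.inl hk)
  · cases ha : s a
    · exact Or.inl (Gr_sub_false h ha)
    · exact Or.inr (Gr_sub_true h ha)
lemma Gr_degree {n : ℕ} (s : Fin n → Bool) (k : Fin n) :
    (Gr s).degree k = (if s k then k.1 else 0) + #(univ.filter fun j => k < j ∧ s j) := by
  rw [SimpleGraph.degree, neighborFinset_eq_filter]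
  have hsplit : (univ.filter ((Gr s).Adj k)) =
      (univ.filter fun j => j < k ∧ s k = true) ∪ (univ.filter fun j => k < j ∧ s j = true) := by
    ext j
    simp only [mem_filter, mem_univ, true_and, mem_union]
    show (k ≠ j ∧ s (max k j) = true) ↔ _
    rcases lt_trichotomy j k with h | rfl | h
    · rw [max_eq_left h.le]
      constructor
      · rintro ⟨-, h2⟩; exact Or.inl ⟨h, h2⟩
      · rintro (⟨-, h2⟩ | ⟨h1, -⟩)
        · exact ⟨h.ne', h2⟩
        · exact absurd h1 (asymm h)
    · simp [lt_irrefl]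
    · rw [max_eq_right h.le]
      constructor
      · rintro ⟨-, h2⟩; exact Or.inr ⟨h, h2⟩
      · rintro (⟨h1, -⟩ | ⟨-, h2⟩)
        · exact absurd h1 (asymm h)
        · exact ⟨h.ne, h2⟩
  rw [hsplit, card_union_of_disjoint]
  · congr 1
    cases hk : s k
    · simp
    · simp only [if_true]
      rw [show (univ.filter fun j => j < k ∧ True) = Finset.Iio k by ext j; simp]
      exact Fin.card_Iio k
  · rw [Finset.disjoint_left]
    intro j hj hj'
    simp only [mem_filter] at hj hj'
    exact absurd hj'.2.1 (asymm hj.2.1)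

lemma iso_degree {V W : Type*} [Fintype V] [Fintype W] {G : SimpleGraph V} {G' : SimpleGraph W}
    [DecidableRel G.Adj] [DecidableRel G'.Adj] (e : G ≃g G') (v : V) :
    G'.degree (e v) = G.degree v := by
  rw [← card_neighborSet_eq_degree, ← card_neighborSet_eq_degree]
  exact (Fintype.card_congr (e.mapNeighborSet v)).symm

lemma Gr_key {n : ℕ} {s t : Fin n → Bool} {m : Fin n} (hm : 0 < m.1)
    (hs : s m = true) (ht : t m = false) (hagree : ∀ j, m < j → s j = t j) :
    ¬ Nonempty (Gr s ≃g Gr t) := by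
  rintro ⟨e⟩
  set T := #(univ.filter fun j => m < j ∧ t j = true) with hT
  set d := m.1 + T with hd
  have hTeq : #(univ.filter fun j : Fin n => m < j ∧ s j = true) = T := by
    rw [hT]
    apply congrArg
    apply filter_congr
    intro j _
    by_cases h : m < j
    · simp [h, hagree j h]
    · simp [h]
  have hdeg_gt : ∀ k : Fin n, m < k → (Gr s).degree k = (Gr t).degree k := by
    intro k hk
    rw [Gr_degree, Gr_degree, hagree k hk]
    congr 2
    apply filter_congr
    intro j _
    by_cases h : k < j
    · simp [h, hagree j (hk.trans h)]
    · simp [h]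
  have hdegm : (Gr s).degree m = d := by
    rw [Gr_degree, hs, if_pos rfl, hTeq]
  have hlt : ∀ k : Fin n, k ≤ m → (Gr t).degree k < d := by
    intro k hk
    rcases eq_or_lt_of_le hk with rfl | hk
    · rw [Gr_degree, ht]
      simpa [hd, hT] using hm
    · rw [Gr_degree]
      have h1 : (if t k then k.1 else 0) ≤ k.1 := by split <;> omega
      have h2 : (univ.filter fun j : Fin n => k < j ∧ t j = true)
          ⊆ Finset.Ioo k m ∪ (univ.filter fun j : Fin n => m < j ∧ t j = true) := by
        intro j hj
        simp only [mem_filter, mem_univ, true_and] at hj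
        rcases lt_trichotomy j m with h | rfl | h
        · exact mem_union_left _ (by simp [Finset.mem_Ioo, hj.1, h])
        · exact absurd hj.2 (by simp [ht])
        · exact mem_union_right _ (by simp [h, hj.2])
      have h3 := (card_le_card h2).trans (card_union_le _ _)
      rw [Fin.card_Ioo] at h3
      have hkm : k.1 < m.1 := hk
      omega
  have hcard : #(univ.filter fun x => d ≤ (Gr s).degree x)
      = #(univ.filter fun x => d ≤ (Gr t).degree x) := by
    apply Finset.card_bij' (fun x _ => e x) (fun y _ => e.symm y)
    · intro a ha
      simp only [mem_filter, mem_univ, true_and] at ha ⊢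
      rwa [iso_degree e a]
    · intro a ha
      simp only [mem_filter, mem_univ, true_and] at ha ⊢
      have := iso_degree e (e.symm a)
      rw [RelIso.apply_symm_apply] at this
      rw [← this]; exact ha
    · intro a _; simp
    · intro a _; simp
  have hmem : m ∈ univ.filter fun x => d ≤ (Gr s).degree x := by
    simp [hdegm]
  have hsub : (univ.filter fun x => d ≤ (Gr t).degree x)
      ⊆ (univ.filter fun x => d ≤ (Gr s).degree x).erase m := by
    intro x hx
    simp only [mem_filter, mem_univ, true_and] at hx
    have hmx : m < x := by
      by_contra h
      push_neg at h
      exact absurd hx (not_le_of_gt (hlt x h))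
    rw [Finset.mem_erase]
    refine ⟨hmx.ne', ?_⟩
    simp only [mem_filter, mem_univ, true_and]
    rw [hdeg_gt x hmx]
    exact hx
  have := (card_le_card hsub).trans_lt (card_erase_lt_of_mem hmem)
  omega

def extb (n : ℕ) (v : Fin (n - 1) → Bool) : Fin n → Bool :=
  fun k => if h : k.1 = 0 then false else v ⟨k.1 - 1, by omega⟩

lemma extb_inj {n : ℕ} {v w : Fin (n - 1) → Bool}
    (h : Nonempty (Gr (extb n v) ≃g Gr (extb n w))) : v = w := by
  by_contra hvw
  have hne : ∃ j : Fin (n - 1), v j ≠ w j := by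
    by_contra h'
    push_neg at h'
    exact hvw (funext h')
  obtain ⟨j, hj⟩ := hne
  set D : Finset (Fin n) := univ.filter fun k => extb n v k ≠ extb n w k with hD
  have hDne : D.Nonempty := by
    refine ⟨⟨j.1 + 1, by omega⟩, ?_⟩
    rw [hD, mem_filter]; simp only [mem_univ, true_and, extb]
    rw [dif_neg (by omega), dif_neg (by omega)]
    convert hj using 3 <;> omega
  set m := D.max' hDne with hmdef
  have hmD : m ∈ D := D.max'_mem hDne
  have hmne : extb n v m ≠ extb n w m := by
    simpa [hD] using hmD
  have hm : 0 < m.1 := by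
    rcases Nat.eq_zero_or_pos m.1 with h | h
    · exfalso
      apply hmne
      simp [extb, h]
    · exact h
  have hagree : ∀ k : Fin n, m < k → extb n v k = extb n w k := by
    intro k hk
    by_contra h'
    have : k ∈ D := by simpa [hD] using h'
    exact absurd (D.le_max' k this) (not_le_of_gt hk)
  cases hvm : extb n v m
  · have hwm : extb n w m = true := by
      cases h' : extb n w m
      · exact absurd (hvm.trans h'.symm) hmne
      · rfl
    exact Gr_key hm hwm hvm (fun k hk => (hagree k hk).symm) ⟨h.some.symm⟩
  · have hwm : extb n w m = false := by
      cases h' : extb n w m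
      · rfl
      · exact absurd (hvm.trans h'.symm) hmne
    exact Gr_key hm hvm hwm hagree h

section Dom
variable {V : Type*} [Fintype V] [DecidableEq V] {G : SimpleGraph V} [DecidableRel G.Adj]

lemma deg_le_of_sub {a b : V} (hab : G.neighborSet a ⊆ G.neighborSet b ∪ {b}) :
    G.degree a ≤ G.degree b := by
  rcases eq_or_ne a b with rfl | hne
  · exact le_refl _
  apply Finset.card_le_card_of_injOn (fun x => if x = b then a else x)
  · intro x hx
    rw [Finset.mem_coe, mem_neighborFinset] at hx ⊢
    by_cases h : x = b
    · subst h
      simp only [if_pos rfl]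
      exact hx.symm
    · simp only [if_neg h]
      rcases hab hx with h' | h'
      · exact h'
      · exact absurd h' h
  · intro x hx y hy hxy
    rw [Finset.mem_coe, mem_neighborFinset] at hx hy
    dsimp only at hxy
    by_cases h1 : x = b <;> by_cases h2 : y = b
    · rw [h1, h2]
    · rw [if_pos h1, if_neg h2] at hxy
      exact absurd hxy.symm (G.ne_of_adj hy).symm
    · rw [if_neg h1, if_pos h2] at hxy
      exact absurd hxy (G.ne_of_adj hx).symm
    · rwa [if_neg h1, if_neg h2] at hxy

lemma sub_of_deg_le {a b : V} (hab : G.neighborSet a ⊆ G.neighborSet b ∪ {b})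
    (hd : G.degree b ≤ G.degree a) : G.neighborSet b ⊆ G.neighborSet a ∪ {a} := by
  rcases eq_or_ne a b with rfl | hne
  · intro x hx; exact Or.inl hx
  have hmaps : ∀ x ∈ G.neighborFinset a, (if x = b then a else x) ∈ G.neighborFinset b := by
    intro x hx
    rw [mem_neighborFinset] at hx ⊢
    by_cases h : x = b
    · subst h
      simp only [if_pos rfl]
      exact hx.symm
    · rw [if_neg h]
      rcases hab hx with h' | h'
      · exact h'
      · exact absurd h' h
  have hinj : ∀ x y, x ∈ G.neighborFinset a → y ∈ G.neighborFinset a →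
      (if x = b then a else x) = (if y = b then a else y) → x = y := by
    intro x y hx hy hxy
    rw [mem_neighborFinset] at hx hy
    by_cases h1 : x = b <;> by_cases h2 : y = b
    · rw [h1, h2]
    · rw [if_pos h1, if_neg h2] at hxy
      exact absurd hxy.symm (G.ne_of_adj hy).symm
    · rw [if_neg h1, if_pos h2] at hxy
      exact absurd hxy (G.ne_of_adj hx).symm
    · rwa [if_neg h1, if_neg h2] at hxy
  have hsurj := Finset.surj_on_of_inj_on_of_card_le (s := G.neighborFinset a)
    (t := G.neighborFinset b) (fun x _ => if x = b then a else x) hmaps hinj hd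
  intro x hx
  obtain ⟨y, hy, hxy⟩ := hsurj x (by rwa [mem_neighborFinset])
  by_cases h : y = b
  · rw [if_pos h] at hxy
    exact Or.inr (by simp [hxy])
  · rw [if_neg h] at hxy
    subst hxy
    exact Or.inl (by simpa using hy)

lemma exists_dom_or_isolated [Nonempty V]
    (hG : ∀ a b : V, G.neighborSet a ⊆ G.neighborSet b ∪ {b} ∨
      G.neighborSet b ⊆ G.neighborSet a ∪ {a}) :
    (∃ u : V, ∀ y, y ≠ u → G.Adj u y) ∨ (∃ w : V, ∀ z, ¬ G.Adj w z) := by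
  obtain ⟨u, -, hu⟩ := Finset.exists_max_image (Finset.univ : Finset V) (fun v => G.degree v : V → ℕ) Finset.univ_nonempty
  obtain ⟨w, -, hw⟩ := Finset.exists_min_image (Finset.univ : Finset V) (fun v => G.degree v : V → ℕ) Finset.univ_nonempty
  have hu' : ∀ v, G.neighborSet v ⊆ G.neighborSet u ∪ {u} := by
    intro v
    rcases hG v u with h | h
    · exact h
    · exact sub_of_deg_le h (hu v (Finset.mem_univ v))
  have hw' : ∀ v, G.neighborSet w ⊆ G.neighborSet v ∪ {v} := by
    intro v
    rcases hG w v with h | h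
    · exact h
    · exact sub_of_deg_le h (hw v (Finset.mem_univ v))
  by_cases hdom : ∀ y, y ≠ u → G.Adj u y
  · exact Or.inl ⟨u, hdom⟩
  push_neg at hdom
  obtain ⟨y, hyu, hy⟩ := hdom
  right
  refine ⟨w, ?_⟩
  intro z hz
  have hzw : z ∈ G.neighborSet w := hz
  have hynw : y ∉ G.neighborSet w := by
    intro h
    rcases hu' w h with h' | h'
    · exact hy h'
    · exact hyu h'
  have hzy : z ∈ G.neighborSet y := by
    rcases hw' y hzw with h' | h'
    · exact h'
    · rw [Set.mem_singleton_iff] at h'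
      subst h'
      exact absurd hzw hynw
  have : y ∈ G.neighborSet z := hzy.symm
  rcases hu' z this with h' | h'
  · exact hy h'
  · exact hyu h'

end Dom

lemma Gr_surj : ∀ (n : ℕ) (G : SimpleGraph (Fin n)),
    (∀ a b : Fin n, G.neighborSet a ⊆ G.neighborSet b ∪ {b} ∨
      G.neighborSet b ⊆ G.neighborSet a ∪ {a}) →
    ∃ s : Fin n → Bool, Nonempty (G ≃g Gr s) := by
  intro n
  induction n with
  | zero =>
    intro G _
    exact ⟨fun _ => false, ⟨⟨Equiv.refl _, fun {a b} => a.elim0⟩⟩⟩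
  | succ n ih =>
    intro G hG
    classical
    obtain ⟨x, β, hx⟩ : ∃ (x : Fin (n + 1)) (β : Bool), ∀ y, y ≠ x → (G.Adj x y ↔ β = true) := by
      rcases exists_dom_or_isolated (G := G) hG with ⟨u, hu⟩ | ⟨w, hw⟩
      · exact ⟨u, true, fun y hy => ⟨fun _ => rfl, fun _ => hu y hy⟩⟩
      · exact ⟨w, false, fun y _ => ⟨fun h => absurd h (hw y), fun h => by simp at h⟩⟩
    set G₀ : SimpleGraph (Fin n) := G.comap (x.succAbove : Fin n → Fin (n + 1)) with hG₀
    have hcomap : ∀ a b : Fin n, G₀.Adj a b ↔ G.Adj (x.succAbove a) (x.succAbove b) := by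
      intro a b; rfl
    have hG₀thr : ∀ a b : Fin n, G₀.neighborSet a ⊆ G₀.neighborSet b ∪ {b} ∨
        G₀.neighborSet b ⊆ G₀.neighborSet a ∪ {a} := by
      have key : ∀ a b : Fin n,
          G.neighborSet (x.succAbove a) ⊆ G.neighborSet (x.succAbove b) ∪ {x.succAbove b} →
          G₀.neighborSet a ⊆ G₀.neighborSet b ∪ {b} := by
        intro a b h k hk
        have hk' : x.succAbove k ∈ G.neighborSet (x.succAbove a) := hk
        rcases h hk' with h' | h'
        · exact Or.inl h'
        · rw [Set.mem_singleton_iff] at h'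
          exact Or.inr (Fin.succAbove_right_injective h')
      intro a b
      rcases hG (x.succAbove a) (x.succAbove b) with h | h
      · exact Or.inl (key a b h)
      · exact Or.inr (key b a h)
    obtain ⟨s₀, ⟨e₀⟩⟩ := ih G₀ hG₀thr
    set s : Fin (n + 1) → Bool := fun k => if h : k.1 < n then s₀ ⟨k.1, h⟩ else β with hs
    have hs_cast : ∀ c : Fin n, s c.castSucc = s₀ c := by
      intro c
      simp only [hs]
      rw [dif_pos (show (c.castSucc : ℕ) < n by simp)]
      exact congrArg s₀ (Fin.ext (by simp))
    have hs_last : s (Fin.last n) = β := by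
      simp only [hs]
      rw [dif_neg (by simp)]
    let φ : Fin (n + 1) ≃ Fin (n + 1) :=
      (finSuccEquiv' x).trans ((Equiv.optionCongr e₀.toEquiv).trans (finSuccEquiv' (Fin.last n)).symm)
    have hφx : φ x = Fin.last n := by
      simp [φ, finSuccEquiv'_at, finSuccEquiv'_symm_none]
    have hφa : ∀ i : Fin n, φ (x.succAbove i) = (e₀ i).castSucc := by
      intro i
      simp only [φ, Equiv.trans_apply, finSuccEquiv'_succAbove, Equiv.optionCongr_apply,
        Option.map_some, finSuccEquiv'_symm_some, Fin.succAbove_last]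
      rfl
    refine ⟨s, ⟨⟨φ, ?_⟩⟩⟩
    intro a b
    rcases eq_or_ne a x with ha | ha
    · rcases eq_or_ne b x with hb | hb
      · rw [ha, hb]
        simp [(Gr s).irrefl, G.irrefl]
      · obtain ⟨j, hj⟩ := Fin.exists_succAbove_eq hb
        rw [ha, ← hj, hφx, hφa, Gr_adj]
        have h1 : Fin.last n ≠ (e₀ j).castSucc := (Fin.castSucc_lt_last _).ne'
        have h2 : max (Fin.last n) ((e₀ j).castSucc) = Fin.last n :=
          max_eq_left (Fin.le_last _)
        rw [h2, hs_last]
        have h3 := hx (x.succAbove j) (Fin.succAbove_ne x j)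
        simp only [h1, true_and, ne_eq, not_false_eq_true]
        exact h3.symm
    · obtain ⟨i, hi⟩ := Fin.exists_succAbove_eq ha
      rcases eq_or_ne b x with hb | hb
      · rw [hb, ← hi, hφx, hφa, Gr_adj]
        have h1 : (e₀ i).castSucc ≠ Fin.last n := (Fin.castSucc_lt_last _).ne
        have h2 : max ((e₀ i).castSucc) (Fin.last n) = Fin.last n :=
          max_eq_right (Fin.le_last _)
        rw [h2, hs_last]
        have h3 := hx (x.succAbove i) (Fin.succAbove_ne x i)
        rw [G.adj_comm]
        simp only [h1, true_and, ne_eq, not_false_eq_true]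
        exact h3.symm
      · obtain ⟨j, hj⟩ := Fin.exists_succAbove_eq hb
        rw [← hi, ← hj, hφa, hφa, Gr_adj]
        have hmax : max ((e₀ i).castSucc) ((e₀ j).castSucc) = (max (e₀ i) (e₀ j)).castSucc := by
          rcases le_total (e₀ i) (e₀ j) with h | h
          · rw [max_eq_right h, max_eq_right (by simpa using h)]
          · rw [max_eq_left h, max_eq_left (by simpa using h)]
        rw [hmax, hs_cast]
        have heq : ((e₀ i).castSucc ≠ (e₀ j).castSucc ∧ s₀ (max (e₀ i) (e₀ j)) = true)
            ↔ (Gr s₀).Adj (e₀ i) (e₀ j) := by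
          rw [Gr_adj]
          constructor
          · rintro ⟨g1, g2⟩
            exact ⟨fun h => g1 (by rw [h]), g2⟩
          · rintro ⟨g1, g2⟩
            exact ⟨fun h => g1 (Fin.castSucc_injective _ h), g2⟩
        rw [heq, e₀.map_rel_iff]
        exact hcomap i j

/-- The number of unlabeled threshold graphs (threshold graphs on `n` labeled vertices,
counted up to graph isomorphism) is `2^{n−1}`, for `n ≥ 1`. -/
theorem card_unlabeled_threshold_graphs (n : ℕ) (hn : 1 ≤ n) :
    Nat.card
      (Quot (fun G G' : {G : SimpleGraph (Fin n) //
          ∀ a b : Fin n, G.neighborSet a ⊆ G.neighborSet b ∪ {b} ∨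
            G.neighborSet b ⊆ G.neighborSet a ∪ {a}} =>
        Nonempty (G.val ≃g G'.val))) = 2 ^ (n - 1) := by
  set R : {G : SimpleGraph (Fin n) //
      ∀ a b : Fin n, G.neighborSet a ⊆ G.neighborSet b ∪ {b} ∨
        G.neighborSet b ⊆ G.neighborSet a ∪ {a}} →
      {G : SimpleGraph (Fin n) //
      ∀ a b : Fin n, G.neighborSet a ⊆ G.neighborSet b ∪ {b} ∨
        G.neighborSet b ⊆ G.neighborSet a ∪ {a}} → Prop :=
    fun G G' => Nonempty (G.val ≃g G'.val) with hRdef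
  have hequiv : Equivalence R :=
    ⟨fun G => ⟨RelIso.refl _⟩, fun ⟨e⟩ => ⟨e.symm⟩, fun ⟨e⟩ ⟨f⟩ => ⟨e.trans f⟩⟩
  set F : (Fin (n - 1) → Bool) → Quot R :=
    fun v => Quot.mk R ⟨Gr (extb n v), Gr_threshold _⟩ with hF
  have hbij : Function.Bijective F := by
    constructor
    · intro v w h
      apply extb_inj
      rw [hF] at h
      simp only at h
      rw [Quot.eq] at h
      exact hequiv.eqvGen_iff.mp h
    · intro q
      induction q using Quot.ind with
      | _ Gp => ?_
      obtain ⟨G, hG⟩ := Gp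
      obtain ⟨s, ⟨e⟩⟩ := Gr_surj n G hG
      set v : Fin (n - 1) → Bool := fun j => s ⟨j.1 + 1, by have := j.2; omega⟩ with hv
      have hgr : Gr (extb n v) = Gr s := by
        ext i j
        show (i ≠ j ∧ extb n v (max i j) = true) ↔ (i ≠ j ∧ s (max i j) = true)
        have hcong : ∀ (hij : i ≠ j), extb n v (max i j) = s (max i j) := by
          intro hij
          have hpos : 0 < (max i j).1 := by
            rcases lt_trichotomy i j with h | h | h
            · rw [max_eq_right h.le]
              exact lt_of_le_of_lt (Nat.zero_le _) h
            · exact absurd h hij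
            · rw [max_eq_left h.le]
              exact lt_of_le_of_lt (Nat.zero_le _) h
          rw [extb, dif_neg (by omega)]
          rw [hv]
          exact congrArg s (Fin.ext (by simp; omega))
        constructor
        · rintro ⟨h1, h2⟩
          exact ⟨h1, (hcong h1) ▸ h2⟩
        · rintro ⟨h1, h2⟩
          exact ⟨h1, (hcong h1).symm ▸ h2⟩
      refine ⟨v, ?_⟩
      apply Quot.sound
      show Nonempty (Gr (extb n v) ≃g G)
      rw [hgr]
      exact ⟨e.symm⟩
  rw [← Nat.card_eq_of_bijective F hbij]
  simp [Nat.card_eq_fintype_card]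
end
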